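/- arXiv:2401.08656 — 6 statements merged into one kernel-verified Lean document; each statement's English description precedes it below -/
import Mathlib

section
/- Ehrling's Lemma: Let V₀, V, V₁ be real Banach spaces with V₀ ⊂ V ⊂ V₁ such that the embedding of V₀ into V is compact and the embedding of V into V₁ is continuous. Then for every ε > 0 there exists a constant c(ε) > 0 such that ‖v‖_V ≤ ε‖v‖_{V₀} + c(ε)‖v‖_{V₁} for all v ∈ V₀. -/
/-!
Both sides of the inequality are positively homogeneous, so it suffices to prove it when
`‖e₀ v‖ = 1`. If moreover `‖v‖ > ε⁻¹`, the term `ε ‖v‖` alone exceeds `1`. Otherwise `e₀ v`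
lies in the compact set `closure (e₀ '' closedBall 0 ε⁻¹) ∩ sphere 0 1`, which avoids `0`;
on it the continuous function `w ↦ ‖e₁ w‖` is positive since `e₁` is injective, hence bounded
below by some `m > 0`, and `c = m⁻¹` works.
-/

open Filter Topology

noncomputable section

def MapsBoundedToRelCompact {X Y : Type*} [NormedAddCommGroup X] [NormedAddCommGroup Y]
    (f : X → Y) : Prop :=
  ∀ s : Set X, Bornology.IsBounded s → IsCompact (closure (f '' s))

section

variable {𝕜 E F G : Type*} [RCLike 𝕜]
  [NormedAddCommGroup E] [NormedSpace 𝕜 E] [NormedAddCommGroup F] [NormedSpace 𝕜 F]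
  [NormedAddCommGroup G] [NormedSpace 𝕜 G]

theorem norm_le_mul_add_mul_of_forall_norm_eq_one (T : E →ₗ[𝕜] F) (R : E →ₗ[𝕜] G)
    {a b : ℝ} (ha : 0 ≤ a) (hb : 0 ≤ b)
    (h : ∀ u, ‖T u‖ = 1 → 1 ≤ a * ‖u‖ + b * ‖R u‖) (v : E) :
    ‖T v‖ ≤ a * ‖v‖ + b * ‖R v‖ := by
  by_cases hv : T v = 0
  · rw [hv, norm_zero]
    positivity
  have ht : 0 < ‖T v‖ := norm_pos_iff.2 hv
  have hunit := h ((‖T v‖⁻¹ : 𝕜) • v) (by rw [map_smul]; exact norm_smul_inv_norm hv)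
  rw [map_smul, norm_smul, norm_smul, norm_inv, RCLike.norm_ofReal, abs_norm] at hunit
  calc ‖T v‖ = ‖T v‖ * 1 := (mul_one _).symm
    _ ≤ ‖T v‖ * (a * (‖T v‖⁻¹ * ‖v‖) + b * (‖T v‖⁻¹ * ‖R v‖)) := by gcongr
    _ = a * ‖v‖ + b * ‖R v‖ := by field_simp

theorem MapsBoundedToRelCompact.exists_one_le_of_norm_eq_one {T : E →L[𝕜] F} {S : F →L[𝕜] G}
    (hT : MapsBoundedToRelCompact T) (hS : Function.Injective S) {ε : ℝ} (hε : 0 < ε) :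
    ∃ c > (0 : ℝ), ∀ u, ‖T u‖ = 1 → 1 ≤ ε * ‖u‖ + c * ‖S (T u)‖ := by
  set K := closure (T '' Metric.closedBall 0 ε⁻¹) ∩ Metric.sphere 0 1
  have hK : IsCompact K := (hT _ Metric.isBounded_closedBall).inter_right Metric.isClosed_sphere
  have hSK : ∀ w ∈ K, 0 < ‖S w‖ := fun w hw ↦
    norm_pos_iff.2 fun hSw ↦
      Metric.ne_of_mem_sphere hw.2 one_ne_zero (hS (hSw.trans (map_zero S).symm))
  obtain ⟨m, hm, hmK⟩ := hK.exists_forall_le' (continuous_norm.comp S.continuous).continuousOn hSK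
  refine ⟨m⁻¹, inv_pos.2 hm, fun u hu ↦ ?_⟩
  by_cases hu_small : ‖u‖ ≤ ε⁻¹
  · have hTu : T u ∈ K :=
      ⟨subset_closure ⟨u, mem_closedBall_zero_iff.2 hu_small, rfl⟩, mem_sphere_zero_iff_norm.2 hu⟩
    have : 1 ≤ m⁻¹ * ‖S (T u)‖ := by
      rw [inv_mul_eq_div, one_le_div hm]
      exact hmK _ hTu
    linarith [mul_nonneg hε.le (norm_nonneg u)]
  · have : 1 < ε * ‖u‖ := by
      rw [not_le, inv_lt_iff_one_lt_mul₀' hε] at hu_small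
      exact hu_small
    linarith [mul_nonneg (inv_pos.2 hm).le (norm_nonneg (S (T u)))]

end

theorem ehrling_lemma_general
    {V₀ V V₁ : Type*}
    [NormedAddCommGroup V₀] [NormedSpace ℝ V₀]
    [NormedAddCommGroup V] [NormedSpace ℝ V]
    [NormedAddCommGroup V₁] [NormedSpace ℝ V₁]
    (e₀ : V₀ →L[ℝ] V)
    (he₀_cpt : MapsBoundedToRelCompact e₀)
    (e₁ : V →L[ℝ] V₁) (he₁_inj : Function.Injective e₁) :
    ∀ ε > (0 : ℝ), ∃ c > (0 : ℝ), ∀ v : V₀,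
      ‖e₀ v‖ ≤ ε * ‖v‖ + c * ‖e₁ (e₀ v)‖ := by
  intro ε hε
  obtain ⟨c, hc, hunit⟩ := he₀_cpt.exists_one_le_of_norm_eq_one he₁_inj hε
  exact ⟨c, hc, norm_le_mul_add_mul_of_forall_norm_eq_one e₀.toLinearMap
    (e₁ ∘L e₀).toLinearMap hε.le hc.le hunit⟩

/-- **Ehrling's Lemma.** Let `V₀ ⊂ V ⊂ V₁` be real Banach spaces, the embedding `V₀ ↪ V`
(realized as the injective continuous linear map `e₀`) being compact and the embedding
`V ↪ V₁` (realized as the injective continuous linear map `e₁`) being continuous. Then for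
every `ε > 0` there exists `c(ε) > 0` such that `‖v‖_V ≤ ε ‖v‖_{V₀} + c(ε) ‖v‖_{V₁}` for all
`v ∈ V₀`. -/
theorem ehrling_lemma
    {V₀ V V₁ : Type*}
    [NormedAddCommGroup V₀] [NormedSpace ℝ V₀] [CompleteSpace V₀]
    [NormedAddCommGroup V] [NormedSpace ℝ V] [CompleteSpace V]
    [NormedAddCommGroup V₁] [NormedSpace ℝ V₁] [CompleteSpace V₁]
    (e₀ : V₀ →L[ℝ] V) (he₀_inj : Function.Injective e₀)
    (he₀_cpt : MapsBoundedToRelCompact e₀)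
    (e₁ : V →L[ℝ] V₁) (he₁_inj : Function.Injective e₁) :
    ∀ ε > (0 : ℝ), ∃ c > (0 : ℝ), ∀ v : V₀,
      ‖e₀ v‖ ≤ ε * ‖v‖ + c * ‖e₁ (e₀ v)‖ :=
  ehrling_lemma_general e₀ he₀_cpt e₁ he₁_inj
end
end

section
/- Discrete sequence inequality: Let X be a real normed space, N ≥ 2 an integer, and δ₁, …, δ_N ∈ X. Then (1/2) Σ_{i=1}^{N−1} ‖δᵢ‖² + ‖δ_N‖² ≤ (9/4)‖δ₁‖² + 2 Σ_{i=2}^{N} ‖(3/2)δᵢ − (1/2)δ_{i−1}‖²; consequently Σ_{i=1}^{N} ‖δᵢ‖² ≤ (9/2)‖δ₁‖² + 4 Σ_{i=2}^{N} ‖(3/2)δᵢ − (1/2)δ_{i−1}‖². -/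
noncomputable section

/-- **Discrete sequence inequality.** Let `X` be a real normed space, `N ≥ 2` an integer and
`δ₁, …, δ_N ∈ X`. Then
`(1/2) Σ_{i=1}^{N−1} ‖δᵢ‖² + ‖δ_N‖² ≤ (9/4) ‖δ₁‖² + 2 Σ_{i=2}^{N} ‖(3/2)δᵢ − (1/2)δ_{i−1}‖²`,
and consequently
`Σ_{i=1}^{N} ‖δᵢ‖² ≤ (9/2) ‖δ₁‖² + 4 Σ_{i=2}^{N} ‖(3/2)δᵢ − (1/2)δ_{i−1}‖²`. -/
theorem discrete_sequence_inequality
    {X : Type*} [NormedAddCommGroup X] [NormedSpace ℝ X]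
    (N : ℕ) (hN : 2 ≤ N) (δ : ℕ → X) :
    (1 / 2 : ℝ) * ∑ i ∈ Finset.Icc 1 (N - 1), ‖δ i‖ ^ 2 + ‖δ N‖ ^ 2 ≤
        (9 / 4 : ℝ) * ‖δ 1‖ ^ 2
          + 2 * ∑ i ∈ Finset.Icc 2 N, ‖(3 / 2 : ℝ) • δ i - (1 / 2 : ℝ) • δ (i - 1)‖ ^ 2 ∧
      ∑ i ∈ Finset.Icc 1 N, ‖δ i‖ ^ 2 ≤
        (9 / 2 : ℝ) * ‖δ 1‖ ^ 2
          + 4 * ∑ i ∈ Finset.Icc 2 N, ‖(3 / 2 : ℝ) • δ i - (1 / 2 : ℝ) • δ (i - 1)‖ ^ 2 := by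
  set g : ℕ → ℝ := fun i => ‖(3 / 2 : ℝ) • δ i - (1 / 2 : ℝ) • δ (i - 1)‖ ^ 2 with hg
  -- pointwise key inequality
  have key : ∀ i : ℕ, ‖δ (i + 1)‖ ^ 2 ≤ (2/3) * g (i + 1) + (1/3) * ‖δ i‖ ^ 2 := by
    intro i
    have hrw : δ (i + 1) =
        (2/3 : ℝ) • ((3 / 2 : ℝ) • δ (i + 1) - (1 / 2 : ℝ) • δ i) + (1/3 : ℝ) • δ i := by
      module
    have htri : ‖δ (i + 1)‖ ≤
        (2/3 : ℝ) * ‖(3 / 2 : ℝ) • δ (i + 1) - (1 / 2 : ℝ) • δ i‖ + (1/3 : ℝ) * ‖δ i‖ := by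
      calc ‖δ (i + 1)‖ = ‖(2/3 : ℝ) • ((3 / 2 : ℝ) • δ (i + 1) - (1 / 2 : ℝ) • δ i)
            + (1/3 : ℝ) • δ i‖ := by rw [← hrw]
        _ ≤ ‖(2/3 : ℝ) • ((3 / 2 : ℝ) • δ (i + 1) - (1 / 2 : ℝ) • δ i)‖
            + ‖(1/3 : ℝ) • δ i‖ := norm_add_le _ _
        _ = (2/3 : ℝ) * ‖(3 / 2 : ℝ) • δ (i + 1) - (1 / 2 : ℝ) • δ i‖
            + (1/3 : ℝ) * ‖δ i‖ := by
            rw [norm_smul, norm_smul]; norm_num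
    have hgeq : g (i + 1) = ‖(3 / 2 : ℝ) • δ (i + 1) - (1 / 2 : ℝ) • δ i‖ ^ 2 := by
      simp [hg]
    rw [hgeq]
    nlinarith [norm_nonneg (δ (i+1)), norm_nonneg (δ i),
      norm_nonneg ((3 / 2 : ℝ) • δ (i + 1) - (1 / 2 : ℝ) • δ i), htri,
      sq_nonneg (‖(3 / 2 : ℝ) • δ (i + 1) - (1 / 2 : ℝ) • δ i‖ - ‖δ i‖),
      mul_self_nonneg (‖δ (i+1)‖)]
  have hxnn : ∀ i, (0:ℝ) ≤ ‖δ i‖ ^ 2 := fun i => by positivity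
  have hgnn : ∀ i, (0:ℝ) ≤ g i := fun i => by positivity
  -- main induction
  have main : ∀ n, 1 ≤ n →
      ∑ i ∈ Finset.Icc 1 n, ‖δ i‖ ^ 2 + (1/2) * ‖δ n‖ ^ 2 ≤
        (3/2) * ‖δ 1‖ ^ 2 + ∑ i ∈ Finset.Icc 2 n, g i := by
    intro n hn
    induction n, hn using Nat.le_induction with
    | base => simp; nlinarith [hxnn 1]
    | succ n hn ih =>
      rw [Finset.sum_Icc_succ_top (by omega : 1 ≤ n + 1),
        Finset.sum_Icc_succ_top (by omega : 2 ≤ n + 1)]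
      have := key n
      linarith
  have hG : (0:ℝ) ≤ ∑ i ∈ Finset.Icc 2 N, g i := Finset.sum_nonneg fun i _ => hgnn i
  have hmainN := main N (by omega)
  -- x N ≤ sum
  have hmem : N ∈ Finset.Icc 1 N := by simp; omega
  have hxle : ‖δ N‖ ^ 2 ≤ ∑ i ∈ Finset.Icc 1 N, ‖δ i‖ ^ 2 :=
    Finset.single_le_sum (fun i _ => hxnn i) hmem
  -- split the last term
  have hsplit : ∑ i ∈ Finset.Icc 1 N, ‖δ i‖ ^ 2 =
      ∑ i ∈ Finset.Icc 1 (N - 1), ‖δ i‖ ^ 2 + ‖δ N‖ ^ 2 := by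
    have : N = (N - 1) + 1 := by omega
    rw [this, Finset.sum_Icc_succ_top (by omega : 1 ≤ N - 1 + 1)]
    simp
  constructor
  · nlinarith [hxnn 1, hxnn N, hG]
  · nlinarith [hxnn 1, hxnn N, hG]
end
end

section
/- Strong L² convergence of the piecewise constant BDF2 averages: Let X be a real Banach space, T > 0, and f ∈ L²(0,T;X). For an integer N ≥ 2 set τ = T/N, define f¹ = (1/τ)∫₀^τ f(t) dt and fⁿ = (3/(2τ))∫_{(n−1)τ}^{nτ} f(t) dt − (1/(2τ))∫_{(n−2)τ}^{(n−1)τ} f(t) dt for n = 2,…,N, and let f̄_τ(t) = fⁿ for t ∈ ((n−1)τ, nτ]. Then f̄_τ → f strongly in L²(0,T;X) as N → ∞, i.e. ∫₀^T ‖f̄_τ(t) − f(t)‖_X² dt → 0. -/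
open Filter Topology MeasureTheory Set

noncomputable section

/-- The BDF2 averages of a function `f ∈ L²(0,T;X)`: `f¹ = (1/τ)∫₀^τ f`,
`fⁿ = (3/(2τ))∫_{(n−1)τ}^{nτ} f − (1/(2τ))∫_{(n−2)τ}^{(n−1)τ} f` for `n ≥ 2`,
where `τ = T/N` (Bochner integrals). -/
def rotheAvg {X : Type*} [NormedAddCommGroup X] [NormedSpace ℝ X] [CompleteSpace X]
    (T : ℝ) (N : ℕ) (f : ℝ → X) (n : ℕ) : X :=
  if n = 1 then (T / N)⁻¹ • ∫ t in Ioc (0 : ℝ) (T / N), f t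
  else (3 / (2 * (T / N))) • (∫ t in Ioc (((n : ℝ) - 1) * (T / N)) ((n : ℝ) * (T / N)), f t)
    - (1 / (2 * (T / N))) • (∫ t in Ioc (((n : ℝ) - 2) * (T / N)) (((n : ℝ) - 1) * (T / N)), f t)

/-- The piecewise constant interpolant `f̄_τ(t) = fⁿ` for `t ∈ ((n−1)τ, nτ]`, `τ = T/N`. -/
def rotheAvgInterp {X : Type*} [NormedAddCommGroup X] [NormedSpace ℝ X] [CompleteSpace X]
    (T : ℝ) (N : ℕ) (f : ℝ → X) (t : ℝ) : X :=
  rotheAvg T N f ⌈t / (T / N)⌉₊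

/-!
The averaging map `f ↦ f̄_τ` is linear and bounded on `L²(0,T;X)` uniformly in `τ`: by Jensen's
inequality the averages `Aₖ` of `f` over the cells `(kτ, (k+1)τ]` satisfy
`τ‖Aₖ‖² ≤ ∫_{(kτ, (k+1)τ]} ‖f‖²`, and `f¹ = A₀`, `fⁿ = (3/2)Aₙ₋₁ - (1/2)Aₙ₋₂`, so
`τ‖fⁿ‖² ≤ 3τ‖Aₙ₋₁‖² + τ‖Aₙ₋₂‖²` and `‖f̄_τ‖² ≤ 4‖f‖²`.
For uniformly continuous `g`, `ḡ_τ(t)` only averages `g` over points within `2τ` of `t`, so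
`ḡ_τ → g` uniformly. Since such `g` are dense in `L²`, an `ε/3` argument concludes.
-/

open scoped ENNReal

section Averages

variable {α X : Type*} [MeasurableSpace α] {μ : Measure α} {s : Set α}
  [NormedAddCommGroup X] [NormedSpace ℝ X]

lemma setAverage_sub {f g : α → X} (hf : IntegrableOn f s μ) (hg : IntegrableOn g s μ) :
    ⨍ x in s, (f - g) x ∂μ = ⨍ x in s, f x ∂μ - ⨍ x in s, g x ∂μ := by
  simp only [setAverage_eq, Pi.sub_apply, integral_sub hf hg, smul_sub]

lemma measureReal_mul_sq_norm_setAverage_le [CompleteSpace X] (h₀ : μ s ≠ 0) (hs : μ s ≠ ∞)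
    {f : α → X} (hf : MemLp f 2 (μ.restrict s)) :
    μ.real s * ‖⨍ x in s, f x ∂μ‖ ^ 2 ≤ ∫ x in s, ‖f x‖ ^ 2 ∂μ := by
  have := Fact.mk hs.lt_top
  have hjensen : ‖⨍ x in s, f x ∂μ‖ ^ 2 ≤ ⨍ x in s, ‖f x‖ ^ 2 ∂μ :=
    (convexOn_univ_norm.pow (fun _ _ => norm_nonneg _) 2).map_set_average_le
      (continuous_norm.pow 2).continuousOn isClosed_univ h₀ hs (.of_forall fun _ => mem_univ _)
      (hf.integrable one_le_two) (hf.integrable_norm_pow two_ne_zero)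
  have hpos : 0 < μ.real s := ENNReal.toReal_pos h₀ hs
  rwa [setAverage_eq μ (fun x => ‖f x‖ ^ 2), smul_eq_mul, le_inv_mul_iff₀ hpos] at hjensen

lemma dist_setAverage_le [CompleteSpace X] (h₀ : μ s ≠ 0) (hs : μ s ≠ ∞) (hsm : MeasurableSet s)
    {f : α → X} (hf : IntegrableOn f s μ) {y : X} {c : ℝ} (h : ∀ x ∈ s, dist (f x) y ≤ c) :
    dist (⨍ x in s, f x ∂μ) y ≤ c :=
  (convex_closedBall y c).set_average_mem Metric.isClosed_closedBall h₀ hs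
    ((ae_restrict_mem hsm).mono h) hf

end Averages

lemma integral_norm_sq_eq_lpNorm_sq {α E : Type*} [MeasurableSpace α] [NormedAddCommGroup E]
    {μ : Measure α} {u : α → E} (hu : AEStronglyMeasurable u μ) :
    ∫ x, ‖u x‖ ^ 2 ∂μ = lpNorm u 2 μ ^ 2 := by
  have h := lpNorm_nnreal_eq_integral_norm_rpow (p := 2) two_ne_zero hu
  push_cast at h
  rw [h, ← Real.rpow_natCast, ← Real.rpow_mul (integral_nonneg fun _ => by positivity)]
  norm_num

lemma integral_norm_add_sub_sq_le {α X : Type*} [MeasurableSpace α] [NormedAddCommGroup X]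
    {μ : Measure α} {u v w : α → X} (hu : MemLp u 2 μ) (hv : MemLp v 2 μ) (hw : MemLp w 2 μ) :
    ∫ x, ‖u x + v x - w x‖ ^ 2 ∂μ
      ≤ 3 * (∫ x, ‖u x‖ ^ 2 ∂μ + ∫ x, ‖v x‖ ^ 2 ∂μ + ∫ x, ‖w x‖ ^ 2 ∂μ) := by
  have hu2 := hu.integrable_norm_pow two_ne_zero
  have hv2 := hv.integrable_norm_pow two_ne_zero
  have hw2 := hw.integrable_norm_pow two_ne_zero
  have hsum : Integrable (fun x => 3 * (‖u x‖ ^ 2 + ‖v x‖ ^ 2 + ‖w x‖ ^ 2)) μ :=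
    ((hu2.add hv2).add hw2).const_mul 3
  calc ∫ x, ‖u x + v x - w x‖ ^ 2 ∂μ ≤ ∫ x, 3 * (‖u x‖ ^ 2 + ‖v x‖ ^ 2 + ‖w x‖ ^ 2) ∂μ := by
        refine integral_mono_of_nonneg (.of_forall fun _ => by positivity) hsum
          (.of_forall fun x => ?_)
        have h₁ := norm_sub_le (u x + v x) (w x)
        have h₂ := norm_add_le (u x) (v x)
        have h₃ := norm_nonneg (u x + v x - w x)
        nlinarith [sq_nonneg (‖u x‖ - ‖v x‖), sq_nonneg (‖u x‖ - ‖w x‖),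
          sq_nonneg (‖v x‖ - ‖w x‖)]
    _ = 3 * (∫ x, ‖u x‖ ^ 2 ∂μ + ∫ x, ‖v x‖ ^ 2 ∂μ + ∫ x, ‖w x‖ ^ 2 ∂μ) := by
        rw [integral_const_mul, integral_add (by exact hu2.add hv2) hw2, integral_add hu2 hv2]

lemma tendsto_setIntegral_norm_sub_sq_of_tendstoUniformlyOn {ι α E : Type*}
    [MeasurableSpace α] [NormedAddCommGroup E] {μ : Measure α} {s : Set α} {l : Filter ι}
    {F : ι → α → E} {f : α → E} (hs : μ s ≠ ∞) (h : TendstoUniformlyOn F f l s) :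
    Tendsto (fun i => ∫ x in s, ‖F i x - f x‖ ^ 2 ∂μ) l (𝓝 0) := by
  rw [Metric.tendsto_nhds]
  intro ε hε
  set η := ε / (μ.real s + 1)
  have hη : 0 < η := by positivity
  filter_upwards [Metric.tendstoUniformlyOn_iff.1 h √η (by positivity)] with i hi
  rw [dist_zero_right]
  calc ‖∫ x in s, ‖F i x - f x‖ ^ 2 ∂μ‖ ≤ η * μ.real s := by
        refine norm_setIntegral_le_of_norm_le_const hs.lt_top fun x hx => ?_
        rw [norm_pow, norm_norm, ← dist_eq_norm, dist_comm]
        exact ((Real.lt_sqrt dist_nonneg).1 (hi x hx)).le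
    _ < ε := by
        rw [div_mul_eq_mul_div, div_lt_iff₀ (by positivity)]
        nlinarith [measureReal_nonneg (μ := μ) (s := s)]

lemma exists_uniformContinuous_integral_norm_sub_sq_le {X : Type*} [NormedAddCommGroup X]
    [NormedSpace ℝ X] {μ : Measure ℝ} [μ.Regular] {f : ℝ → X} (hf : MemLp f 2 μ) {ε : ℝ}
    (hε : 0 < ε) :
    ∃ g : ℝ → X, UniformContinuous g ∧ MemLp g 2 μ ∧ ∫ t, ‖f t - g t‖ ^ 2 ∂μ ≤ ε := by
  obtain ⟨g, hg_supp, hfg, hg_cont, hg⟩ := hf.exists_hasCompactSupport_eLpNorm_sub_le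
    ENNReal.ofNat_ne_top (ε := ENNReal.ofReal √ε) (by simpa using hε)
  refine ⟨g, hg_supp.uniformContinuous_of_continuous hg_cont, hg, ?_⟩
  have hlp : lpNorm (f - g) 2 μ ≤ √ε := by
    rw [← toReal_eLpNorm (hf.sub hg).aestronglyMeasurable]
    exact ENNReal.toReal_le_of_le_ofReal (Real.sqrt_nonneg _) hfg
  calc ∫ t, ‖f t - g t‖ ^ 2 ∂μ = lpNorm (f - g) 2 μ ^ 2 :=
        integral_norm_sq_eq_lpNorm_sq (hf.sub hg).aestronglyMeasurable
    _ ≤ √ε ^ 2 := by gcongr; exact lpNorm_nonneg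
    _ = ε := Real.sq_sqrt hε.le

section Elementary

variable {X : Type*} [NormedAddCommGroup X] [NormedSpace ℝ X]

lemma norm_bdf2_sq_le (a b : X) :
    ‖(3 / 2 : ℝ) • a - (1 / 2 : ℝ) • b‖ ^ 2 ≤ 3 * ‖a‖ ^ 2 + ‖b‖ ^ 2 := by
  have h := norm_sub_le ((3 / 2 : ℝ) • a) ((1 / 2 : ℝ) • b)
  rw [norm_smul, norm_smul, Real.norm_of_nonneg (by norm_num),
    Real.norm_of_nonneg (by norm_num)] at h
  nlinarith [sq_nonneg (‖a‖ - ‖b‖), norm_nonneg ((3 / 2 : ℝ) • a - (1 / 2 : ℝ) • b)]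

lemma dist_bdf2_le {a b y : X} {c : ℝ} (ha : dist a y ≤ c) (hb : dist b y ≤ c) :
    dist ((3 / 2 : ℝ) • a - (1 / 2 : ℝ) • b) y ≤ 2 * c := by
  rw [dist_eq_norm] at ha hb ⊢
  calc ‖(3 / 2 : ℝ) • a - (1 / 2 : ℝ) • b - y‖
        = ‖(3 / 2 : ℝ) • (a - y) - (1 / 2 : ℝ) • (b - y)‖ := by congr 1; module
    _ ≤ 3 / 2 * ‖a - y‖ + 1 / 2 * ‖b - y‖ := by
        refine (norm_sub_le _ _).trans_eq ?_
        rw [norm_smul, norm_smul, Real.norm_of_nonneg (by norm_num),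
          Real.norm_of_nonneg (by norm_num)]
    _ ≤ 2 * c := by linarith

lemma sum_range_succ_le_four_mul_sum {a b : ℕ → ℝ} (hb : ∀ k, 0 ≤ b k) {M : ℕ}
    (h₀ : a 0 ≤ b 0) (hsucc : ∀ k < M, a (k + 1) ≤ 3 * b (k + 1) + b k) :
    ∑ k ∈ Finset.range (M + 1), a k ≤ 4 * ∑ k ∈ Finset.range (M + 1), b k := by
  have hshift : ∑ k ∈ Finset.range M, b k ≤ ∑ k ∈ Finset.range M, b (k + 1) + b 0 := by
    rw [← Finset.sum_range_succ' b]
    exact Finset.sum_le_sum_of_subset_of_nonneg (Finset.range_subset_range.2 M.le_succ)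
      fun k _ _ => hb k
  have hsum : ∑ k ∈ Finset.range M, a (k + 1) ≤ ∑ k ∈ Finset.range M, (3 * b (k + 1) + b k) :=
    Finset.sum_le_sum fun k hk => hsucc k (Finset.mem_range.1 hk)
  rw [Finset.sum_add_distrib, ← Finset.mul_sum] at hsum
  rw [Finset.sum_range_succ', Finset.sum_range_succ' b]
  linarith [hb 0]

end Elementary

/-- Cells are indexed from `0` and the averages from `1`: `f̄_τ = f^{k+1}` on `timeCell τ k`. -/
def timeCell (τ : ℝ) (k : ℕ) : Set ℝ := Ioc (k * τ) ((k + 1) * τ)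

section TimeCell

variable {τ s t : ℝ} {k : ℕ}

lemma measurableSet_timeCell : MeasurableSet (timeCell τ k) := measurableSet_Ioc

lemma volume_timeCell : volume (timeCell τ k) = ENNReal.ofReal τ := by
  rw [timeCell, Real.volume_Ioc]
  ring_nf

lemma volume_real_timeCell (hτ : 0 ≤ τ) : volume.real (timeCell τ k) = τ := by
  rw [measureReal_def, volume_timeCell, ENNReal.toReal_ofReal hτ]

lemma timeCell_subset_Ioc {T : ℝ} (hT : 0 ≤ T) {N : ℕ} (hk : k < N) :
    timeCell (T / N) k ⊆ Ioc 0 T := by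
  have hN : (N : ℝ) ≠ 0 := by exact_mod_cast (Nat.zero_lt_of_lt hk).ne'
  refine Ioc_subset_Ioc (by positivity) ?_
  calc ((k : ℝ) + 1) * (T / N) ≤ N * (T / N) := by gcongr; exact_mod_cast hk
    _ = T := mul_div_cancel₀ T hN

lemma natCeil_div_eq_of_mem_timeCell (hτ : 0 < τ) (ht : t ∈ timeCell τ k) :
    ⌈t / τ⌉₊ = k + 1 := by
  rw [Nat.ceil_eq_iff k.succ_ne_zero, Nat.succ_sub_one, Nat.cast_add_one, lt_div_iff₀ hτ,
    div_le_iff₀ hτ]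
  exact ht

lemma exists_mem_timeCell (hτ : 0 < τ) (ht : 0 < t) : ∃ k : ℕ, t ∈ timeCell τ k := by
  have htτ : 0 < t / τ := div_pos ht hτ
  have h1 : 1 ≤ ⌈t / τ⌉₊ := Nat.one_le_iff_ne_zero.2 (Nat.ceil_pos.2 htτ).ne'
  refine ⟨⌈t / τ⌉₊ - 1, ?_⟩
  rw [timeCell, Nat.cast_sub h1, Nat.cast_one, sub_add_cancel, mem_Ioc, ← lt_div_iff₀ hτ,
    ← div_le_iff₀ hτ]
  exact ⟨by linarith [Nat.ceil_lt_add_one htτ.le], Nat.le_ceil _⟩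

lemma lt_of_mem_timeCell (hτ : 0 < τ) (ht : t ∈ timeCell τ k) {N : ℕ} (htN : t ≤ N * τ) :
    k < N := by
  exact_mod_cast lt_of_mul_lt_mul_right (ht.1.trans_le htN) hτ.le

lemma dist_lt_of_mem_timeCell {i : ℕ} (hs : s ∈ timeCell τ i) (ht : t ∈ timeCell τ k)
    (hik : i ≤ k) (hki : k ≤ i + 1) : dist s t < 2 * τ := by
  have hik' : (i : ℝ) ≤ k := by exact_mod_cast hik
  have hki' : (k : ℝ) ≤ i + 1 := by exact_mod_cast hki
  obtain ⟨hs₁, hs₂⟩ := hs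
  obtain ⟨ht₁, ht₂⟩ := ht
  have hτ : 0 < τ := by nlinarith
  rw [Real.dist_eq, abs_lt]
  constructor <;> nlinarith

lemma setIntegral_Ioc_eq_sum_timeCell {E : Type*} [NormedAddCommGroup E] [NormedSpace ℝ E]
    {T : ℝ} (hT : 0 ≤ T) {N : ℕ} (hN : N ≠ 0) {F : ℝ → E} (hF : IntegrableOn F (Ioc 0 T)) :
    ∫ t in Ioc 0 T, F t = ∑ k ∈ Finset.range N, ∫ t in timeCell (T / N) k, F t := by
  have hτ : 0 ≤ T / N := by positivity
  have hmono : ∀ k : ℕ, (k : ℝ) * (T / N) ≤ ((k + 1 : ℕ) : ℝ) * (T / N) := fun k => by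
    gcongr
    exact_mod_cast k.le_succ
  have hsum := intervalIntegral.sum_integral_adjacent_intervals (f := F) (μ := volume)
    (a := fun k : ℕ => (k : ℝ) * (T / N)) (n := N) fun k hk =>
      (intervalIntegrable_iff_integrableOn_Ioc_of_le (hmono k)).2
        (hF.mono_set (by simpa [timeCell] using timeCell_subset_Ioc hT hk))
  rw [Nat.cast_zero, zero_mul, mul_div_cancel₀ T (Nat.cast_ne_zero.2 hN)] at hsum
  rw [← intervalIntegral.integral_of_le hT, ← hsum]
  refine Finset.sum_congr rfl fun k _ => ?_
  rw [intervalIntegral.integral_of_le (hmono k), timeCell, Nat.cast_add_one]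

end TimeCell

section RotheAverages

variable {X : Type*} [NormedAddCommGroup X] [NormedSpace ℝ X] [CompleteSpace X]
  {T : ℝ} {N : ℕ}

lemma rotheAvg_one (hτ : 0 ≤ T / N) (f : ℝ → X) :
    rotheAvg T N f 1 = ⨍ t in timeCell (T / N) 0, f t := by
  rw [rotheAvg, if_pos rfl, setAverage_eq, volume_real_timeCell hτ, timeCell]
  simp

lemma rotheAvg_add_two (hτ : 0 ≤ T / N) (f : ℝ → X) (k : ℕ) :
    rotheAvg T N f (k + 2) = (3 / 2 : ℝ) • (⨍ t in timeCell (T / N) (k + 1), f t)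
      - (1 / 2 : ℝ) • ⨍ t in timeCell (T / N) k, f t := by
  rw [rotheAvg, if_neg (by omega), setAverage_eq, setAverage_eq, volume_real_timeCell hτ,
    volume_real_timeCell hτ, smul_smul, smul_smul, timeCell, timeCell]
  push_cast
  ring_nf

lemma rotheAvgInterp_eq_of_mem_timeCell (hτ : 0 < T / N) {t : ℝ} {k : ℕ}
    (ht : t ∈ timeCell (T / N) k) (f : ℝ → X) :
    rotheAvgInterp T N f t = rotheAvg T N f (k + 1) := by
  rw [rotheAvgInterp, natCeil_div_eq_of_mem_timeCell hτ ht]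

lemma rotheAvg_sub (hT : 0 < T) (hN : N ≠ 0) {f g : ℝ → X} (hf : IntegrableOn f (Ioc 0 T))
    (hg : IntegrableOn g (Ioc 0 T)) {k : ℕ} (hk : k < N) :
    rotheAvg T N (f - g) (k + 1) = rotheAvg T N f (k + 1) - rotheAvg T N g (k + 1) := by
  have hτ : 0 ≤ T / N := by positivity
  have hsub : ∀ j ≤ k, ⨍ t in timeCell (T / N) j, (f - g) t
      = (⨍ t in timeCell (T / N) j, f t) - ⨍ t in timeCell (T / N) j, g t := fun j hj =>
    have hj : timeCell (T / N) j ⊆ Ioc 0 T := timeCell_subset_Ioc hT.le (hj.trans_lt hk)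
    setAverage_sub (hf.mono_set hj) (hg.mono_set hj)
  rcases k with _ | j
  · rw [rotheAvg_one hτ, rotheAvg_one hτ, rotheAvg_one hτ, hsub 0 le_rfl]
  · rw [rotheAvg_add_two hτ, rotheAvg_add_two hτ, rotheAvg_add_two hτ, hsub j j.le_succ,
      hsub (j + 1) le_rfl]
    module

lemma rotheAvgInterp_sub (hT : 0 < T) (hN : N ≠ 0) {f g : ℝ → X}
    (hf : IntegrableOn f (Ioc 0 T)) (hg : IntegrableOn g (Ioc 0 T)) {t : ℝ} (ht : t ∈ Ioc 0 T) :
    rotheAvgInterp T N (f - g) t = rotheAvgInterp T N f t - rotheAvgInterp T N g t := by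
  have hτ : 0 < T / N := by positivity
  obtain ⟨k, hk⟩ := exists_mem_timeCell hτ ht.1
  have hkN : k < N :=
    lt_of_mem_timeCell hτ hk (by rw [mul_div_cancel₀ T (Nat.cast_ne_zero.2 hN)]; exact ht.2)
  simp only [rotheAvgInterp_eq_of_mem_timeCell hτ hk]
  exact rotheAvg_sub hT hN hf hg hkN

lemma stronglyMeasurable_rotheAvgInterp (T : ℝ) (N : ℕ) (f : ℝ → X) :
    StronglyMeasurable (rotheAvgInterp T N f) :=
  (continuous_of_discreteTopology (f := rotheAvg T N f)).stronglyMeasurable.comp_measurable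
    (measurable_id.div_const _).nat_ceil

lemma memLp_rotheAvgInterp (T : ℝ) (N : ℕ) (f : ℝ → X) (p : ℝ≥0∞) :
    MemLp (rotheAvgInterp T N f) p (volume.restrict (Ioc 0 T)) := by
  refine .of_bound (stronglyMeasurable_rotheAvgInterp T N f).aestronglyMeasurable
    (∑ n ∈ Finset.range (N + 1), ‖rotheAvg T N f n‖) ?_
  filter_upwards [ae_restrict_mem measurableSet_Ioc] with t ht
  have hceil : ⌈t / (T / N)⌉₊ ≤ N := by
    rcases eq_or_ne N 0 with rfl | hN
    · simp
    rw [Nat.ceil_le, div_le_iff₀ (div_pos (ht.1.trans_le ht.2) (by positivity)),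
      mul_div_cancel₀ T (Nat.cast_ne_zero.2 hN)]
    exact ht.2
  exact Finset.single_le_sum (fun n _ => norm_nonneg (rotheAvg T N f n))
    (Finset.mem_range.2 (Nat.lt_succ_of_le hceil))

lemma setIntegral_timeCell_norm_rotheAvgInterp_sq (hτ : 0 < T / N) (f : ℝ → X) (k : ℕ) :
    ∫ t in timeCell (T / N) k, ‖rotheAvgInterp T N f t‖ ^ 2
      = T / N * ‖rotheAvg T N f (k + 1)‖ ^ 2 := by
  rw [setIntegral_congr_fun measurableSet_timeCell
      fun t ht => by rw [rotheAvgInterp_eq_of_mem_timeCell hτ ht],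
    setIntegral_const, volume_real_timeCell hτ.le, smul_eq_mul]

lemma mul_sq_norm_setAverage_timeCell_le (hT : 0 < T) {k : ℕ} (hk : k < N) {f : ℝ → X}
    (hf : MemLp f 2 (volume.restrict (Ioc 0 T))) :
    T / N * ‖⨍ t in timeCell (T / N) k, f t‖ ^ 2 ≤ ∫ t in timeCell (T / N) k, ‖f t‖ ^ 2 := by
  have hτ : 0 < T / N := div_pos hT (by exact_mod_cast Nat.zero_lt_of_lt hk)
  simpa only [volume_real_timeCell hτ.le] using
    measureReal_mul_sq_norm_setAverage_le (by simp [volume_timeCell, hτ])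
      (by simp [volume_timeCell])
      (hf.mono_measure (Measure.restrict_mono (timeCell_subset_Ioc hT.le hk) le_rfl))

lemma integral_norm_rotheAvgInterp_sq_le (hT : 0 < T) (hN : N ≠ 0) {f : ℝ → X}
    (hf : MemLp f 2 (volume.restrict (Ioc 0 T))) :
    ∫ t in Ioc 0 T, ‖rotheAvgInterp T N f t‖ ^ 2 ≤ 4 * ∫ t in Ioc 0 T, ‖f t‖ ^ 2 := by
  have hτ : 0 < T / N := by positivity
  rw [setIntegral_Ioc_eq_sum_timeCell hT.le hN (hf.integrable_norm_pow two_ne_zero),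
    setIntegral_Ioc_eq_sum_timeCell hT.le hN
      ((memLp_rotheAvgInterp T N f 2).integrable_norm_pow two_ne_zero)]
  obtain ⟨M, rfl⟩ := Nat.exists_eq_succ_of_ne_zero hN
  refine sum_range_succ_le_four_mul_sum (fun k => integral_nonneg fun _ => by positivity) ?_
    fun k hk => ?_
  · rw [setIntegral_timeCell_norm_rotheAvgInterp_sq hτ, rotheAvg_one hτ.le]
    exact mul_sq_norm_setAverage_timeCell_le hT M.succ_pos hf
  · rw [setIntegral_timeCell_norm_rotheAvgInterp_sq hτ, rotheAvg_add_two hτ.le]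
    nlinarith [norm_bdf2_sq_le (⨍ t in timeCell (T / (M + 1 : ℕ)) (k + 1), f t)
      (⨍ t in timeCell (T / (M + 1 : ℕ)) k, f t),
      mul_sq_norm_setAverage_timeCell_le hT (Nat.succ_lt_succ hk) hf,
      mul_sq_norm_setAverage_timeCell_le hT (hk.trans M.lt_succ_self) hf]

lemma dist_rotheAvgInterp_le (hτ : 0 < T / N) {g : ℝ → X} (hg : Continuous g) {t c : ℝ}
    (ht : 0 < t) (hc : ∀ s, dist s t < 2 * (T / N) → dist (g s) (g t) ≤ c) :
    dist (rotheAvgInterp T N g t) (g t) ≤ 2 * c := by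
  obtain ⟨k, hk⟩ := exists_mem_timeCell hτ ht
  have havg : ∀ i, i ≤ k → k ≤ i + 1 → dist (⨍ s in timeCell (T / N) i, g s) (g t) ≤ c :=
    fun i hik hki => dist_setAverage_le (by simp [volume_timeCell, hτ])
      (by simp [volume_timeCell]) measurableSet_timeCell hg.integrableOn_Ioc
      fun s hs => hc s (dist_lt_of_mem_timeCell hs hk hik hki)
  rw [rotheAvgInterp_eq_of_mem_timeCell hτ hk]
  rcases k with _ | j
  · have hc₀ : 0 ≤ c := dist_nonneg.trans (hc t (by simpa using hτ))
    rw [rotheAvg_one hτ.le]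
    linarith [havg 0 le_rfl zero_le_one]
  · rw [rotheAvg_add_two hτ.le]
    exact dist_bdf2_le (havg (j + 1) le_rfl (by omega)) (havg j j.le_succ le_rfl)

lemma tendstoUniformlyOn_rotheAvgInterp (hT : 0 < T) {g : ℝ → X} (hg : UniformContinuous g) :
    TendstoUniformlyOn (fun N : ℕ => rotheAvgInterp T N g) g atTop (Ioi 0) := by
  rw [Metric.tendstoUniformlyOn_iff]
  intro ε hε
  obtain ⟨δ, hδ, hgδ⟩ := Metric.uniformContinuous_iff.1 hg (ε / 3) (by positivity)
  have hτ : Tendsto (fun N : ℕ => 2 * (T / N)) atTop (𝓝 0) := by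
    simpa using (tendsto_const_div_atTop_nhds_zero_nat T).const_mul 2
  filter_upwards [hτ.eventually (gt_mem_nhds hδ), eventually_ne_atTop 0] with N hNδ hN t ht
  rw [dist_comm]
  have := dist_rotheAvgInterp_le (by positivity) hg.continuous ht (c := ε / 3)
    fun s hs => (hgδ (hs.trans hNδ)).le
  linarith

lemma tendsto_integral_norm_rotheAvgInterp_sub_sq (hT : 0 < T) {g : ℝ → X}
    (hg : UniformContinuous g) :
    Tendsto (fun N : ℕ => ∫ t in Ioc 0 T, ‖rotheAvgInterp T N g t - g t‖ ^ 2) atTop (𝓝 0) :=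
  tendsto_setIntegral_norm_sub_sq_of_tendstoUniformlyOn measure_Ioc_lt_top.ne
    ((tendstoUniformlyOn_rotheAvgInterp hT hg).mono Ioc_subset_Ioi_self)

end RotheAverages

/-- **Strong `L²` convergence of the piecewise constant BDF2 averages.** Let `X` be a real
Banach space, `T > 0` and `f ∈ L²(0,T;X)`. Then `f̄_τ → f` strongly in `L²(0,T;X)` as
`N → ∞`, i.e. `∫₀^T ‖f̄_τ(t) − f(t)‖² dt → 0`. -/
theorem rotheAvgInterp_tendsto_L2
    {X : Type*} [NormedAddCommGroup X] [NormedSpace ℝ X] [CompleteSpace X]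
    (T : ℝ) (hT : 0 < T) (f : ℝ → X)
    (hf : MemLp f 2 (volume.restrict (Ioc (0 : ℝ) T))) :
    Tendsto (fun N : ℕ => ∫ t in Ioc (0 : ℝ) T, ‖rotheAvgInterp T N f t - f t‖ ^ 2)
      atTop (𝓝 0) := by
  refine tendsto_order.2 ⟨fun a ha => .of_forall fun N =>
    ha.trans_le (integral_nonneg fun _ => by positivity), fun ε hε => ?_⟩
  obtain ⟨g, hg, hgL2, hfg⟩ := exists_uniformContinuous_integral_norm_sub_sq_le hf
    (ε := ε / 30) (by positivity)
  filter_upwards [(tendsto_integral_norm_rotheAvgInterp_sub_sq hT hg).eventually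
    (gt_mem_nhds (show 0 < ε / 6 by positivity)), eventually_ne_atTop 0] with N hgN hN
  have hstab := integral_norm_rotheAvgInterp_sq_le hT hN (hf.sub hgL2)
  calc ∫ t in Ioc 0 T, ‖rotheAvgInterp T N f t - f t‖ ^ 2
      = ∫ t in Ioc 0 T,
          ‖rotheAvgInterp T N (f - g) t + (rotheAvgInterp T N g t - g t) - (f - g) t‖ ^ 2 :=
        setIntegral_congr_fun measurableSet_Ioc fun t ht => by
          rw [rotheAvgInterp_sub hT hN (hf.integrable one_le_two) (hgL2.integrable one_le_two) ht,
            Pi.sub_apply]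
          abel_nf
    _ ≤ 3 * ((∫ t in Ioc 0 T, ‖rotheAvgInterp T N (f - g) t‖ ^ 2)
          + (∫ t in Ioc 0 T, ‖rotheAvgInterp T N g t - g t‖ ^ 2)
          + ∫ t in Ioc 0 T, ‖(f - g) t‖ ^ 2) :=
        integral_norm_add_sub_sq_le (memLp_rotheAvgInterp T N _ 2)
          ((memLp_rotheAvgInterp T N g 2).sub hgL2) (hf.sub hgL2)
    _ < ε := by
        simp only [Pi.sub_apply] at hstab ⊢
        linarith
end
end

section
/- Compact embedding of M^{p,q} into L^p: Let 1 ≤ p, q < ∞, T > 0, and let X₁ ⊂ X₂ ⊂ X₃ be real Banach spaces such that X₁ is reflexive, the embedding X₁ ⊂ X₂ is compact, and the embedding X₂ ⊂ X₃ is continuous. Then every sequence (xₙ) of functions [0,T] → X₁ with ‖xₙ‖_{L^p(0,T;X₁)} + ‖xₙ‖_{BV^q(0,T;X₃)} uniformly bounded has a subsequence that converges strongly in L^p(0,T;X₂). -/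
open Filter Topology MeasureTheory Set

noncomputable section

/-- The set of all partition sums `Σ_i ‖x(tᵢ₊₁) − x(tᵢ)‖^q` over finite partitions
`0 = t₀ < t₁ < … < t_m = T` of `[0,T]` (equivalently, over finite families of disjoint open
intervals whose closures cover `[0,T]`); the `BV^q(0,T;X)` seminorm of `x` is the `q`-th root
of the supremum of this set. -/
def bvPowSums {X : Type*} [NormedAddCommGroup X] (q T : ℝ) (x : ℝ → X) : Set ℝ :=
  { r : ℝ | ∃ (m : ℕ) (t : ℕ → ℝ), 0 < m ∧ t 0 = 0 ∧ t m = T ∧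
      (∀ i < m, t i < t (i + 1)) ∧
      r = ∑ i ∈ Finset.range m, ‖x (t (i + 1)) - x (t i)‖ ^ q }

open scoped ENNReal

/-!
By Ehrling's lemma, compactness of `X₁ ⊂ X₂` and injectivity of `X₂ ⊂ X₃` give, for every
`η > 0`, a constant `Λ` with `‖v‖₂ ≤ η ‖v‖₁ + Λ ‖v‖₃`. Split `(0, T]` into `N` equal cells and
sample each `xₙ` in every cell at a point where `‖xₙ‖^p` is at most its cell average. The sampled
step functions are bounded in `X₁` uniformly in `n`, so after embedding they lie in a fixed compact
subset of `L^p(X₂)`. By Ehrling, the `L^p(X₂)` distance from `xₙ` to its step function is at most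
`2ηC` plus `2Λ` times the `L^p` norm of the step function formed by the oscillations of `xₙ` in
`X₃` on the cells. The `BV^q` bound allows at most `C^q / ε^q` cells with oscillation above `ε`,
so this term is small once `ε` is small and `N` is large. Hence `(xₙ)` is totally bounded in the
complete space `L^p(X₂)`.
-/

section Ehrling

variable {X₁ X₂ X₃ : Type*}
  [NormedAddCommGroup X₁] [NormedSpace ℝ X₁] [NormedAddCommGroup X₂] [NormedSpace ℝ X₂]
  [NormedAddCommGroup X₃] [NormedSpace ℝ X₃]

theorem MapsBoundedToRelCompact.exists_norm_le_mul_norm_add_mul_norm {f : X₁ →L[ℝ] X₂}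
    (hf : MapsBoundedToRelCompact f) {g : X₂ →L[ℝ] X₃} (hg : Function.Injective g)
    {η : ℝ} (hη : 0 < η) :
    ∃ Λ, 0 ≤ Λ ∧ ∀ v, ‖f v‖ ≤ η * ‖v‖ + Λ * ‖g (f v)‖ := by
  by_contra! h
  have hunit : ∀ k : ℕ, ∃ v, ‖v‖ = 1 ∧ η + (k + 1) * ‖g (f v)‖ < ‖f v‖ := by
    intro k
    obtain ⟨v, hv⟩ := h (k + 1) (by positivity)
    have hv0 : 0 < ‖v‖ := by
      refine norm_pos_iff.2 fun h0 => ?_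
      simp [h0] at hv
    refine ⟨‖v‖⁻¹ • v, by simp [norm_smul, hv0.ne'], ?_⟩
    simp only [map_smul, norm_smul, norm_inv, norm_norm]
    rw [← mul_lt_mul_iff_right₀ hv0]
    field_simp
    linarith
  choose v hv_norm hv using hunit
  have hg_small : Tendsto (fun k => g (f (v k))) atTop (𝓝 0) := by
    refine squeeze_zero_norm (fun k => ?_)
      (by simpa using tendsto_one_div_add_atTop_nhds_zero_nat.const_mul ‖f‖)
    have hfv : ‖f (v k)‖ ≤ ‖f‖ := by simpa [hv_norm] using f.le_opNorm (v k)
    rw [← div_eq_mul_inv, le_div_iff₀ (by positivity)]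
    nlinarith [hv k]
  obtain ⟨z, -, φ, hφ, hz⟩ := (hf _ (Metric.isBounded_closedBall (x := 0) (r := 1))).tendsto_subseq
    (x := fun k => f (v k)) fun k => subset_closure ⟨v k, by simp [hv_norm], rfl⟩
  have hz0 : z = 0 := hg <| by
    rw [map_zero]
    exact tendsto_nhds_unique ((g.continuous.tendsto z).comp hz) (hg_small.comp hφ.tendsto_atTop)
  have hηz : η ≤ ‖z‖ := ge_of_tendsto' hz.norm fun k => by
    have hgv : 0 ≤ ((φ k : ℝ) + 1) * ‖g (f (v (φ k)))‖ := by positivity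
    simpa using (le_add_of_nonneg_right hgv).trans (hv (φ k)).le
  rw [hz0, norm_zero] at hηz
  linarith

end Ehrling

theorem Finset.sum_range_two_mul {M : Type*} [AddCommMonoid M] (f : ℕ → M) (N : ℕ) :
    ∑ i ∈ Finset.range (2 * N), f i = ∑ j ∈ Finset.range N, (f (2 * j) + f (2 * j + 1)) := by
  induction N with
  | zero => simp
  | succ N ih =>
    rw [show 2 * (N + 1) = 2 * N + 1 + 1 by ring, Finset.sum_range_succ, Finset.sum_range_succ,
      ih, Finset.sum_range_succ, add_assoc]

theorem exists_mul_measure_le_setLIntegral {α : Type*} [MeasurableSpace α] {μ : Measure α}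
    {s : Set α} (hs : MeasurableSet s) (hμ0 : μ s ≠ 0) (hμ : μ s ≠ ∞) {f : α → ℝ≥0∞}
    (hf : AEMeasurable f (μ.restrict s)) : ∃ t ∈ s, f t * μ s ≤ ∫⁻ a in s, f a ∂μ := by
  have : IsFiniteMeasure (μ.restrict s) := ⟨by simpa using hμ.lt_top⟩
  obtain ⟨t, ht, hle⟩ := exists_notMem_null_le_laverage (N := sᶜ)
    (by simpa [Measure.restrict_eq_zero] using hμ0) hf (by simp [Measure.restrict_apply' hs])
  refine ⟨t, not_not.1 ht, ?_⟩
  rwa [setLAverage_eq, ENNReal.le_div_iff_mul_le (Or.inl hμ0) (Or.inl hμ)] at hle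

theorem continuous_indicatorConstLp {α E : Type*} [MeasurableSpace α] [NormedAddCommGroup E]
    {μ : Measure α} {p : ℝ≥0∞} [Fact (1 ≤ p)] {s : Set α} (hs : MeasurableSet s) (hμs : μ s ≠ ∞) :
    Continuous (indicatorConstLp p hs hμs : E → Lp E p μ) :=
  (LipschitzWith.of_dist_le_mul fun c c' => by
    rw [dist_eq_norm, indicatorConstLp_sub, dist_eq_norm,
      Real.coe_toNNReal _ (Real.rpow_nonneg measureReal_nonneg _), mul_comm]
    exact norm_indicatorConstLp_le).continuous

theorem totallyBounded_of_forall_exists_isCompact {α : Type*} [PseudoMetricSpace α] {S : Set α}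
    (h : ∀ δ > 0, ∃ K, IsCompact K ∧ ∀ y ∈ S, ∃ k ∈ K, dist y k ≤ δ) : TotallyBounded S := by
  refine Metric.totallyBounded_iff.2 fun ε hε => ?_
  obtain ⟨K, hK, hSK⟩ := h (ε / 2) (by positivity)
  obtain ⟨F, hF, hKF⟩ := Metric.totallyBounded_iff.1 hK.totallyBounded (ε / 2) (by positivity)
  refine ⟨F, hF, fun y hy => ?_⟩
  obtain ⟨k, hk, hyk⟩ := hSK y hy
  obtain ⟨z, hz, hkz⟩ := mem_iUnion₂.1 (hKF hk)
  rw [Metric.mem_ball] at hkz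
  exact mem_iUnion₂.2 ⟨z, hz, Metric.mem_ball.2 (by linarith [dist_triangle y k z])⟩

theorem exists_subseq_tendsto_eLpNorm_of_forall_isCompact {α E : Type*} [MeasurableSpace α]
    [NormedAddCommGroup E] [CompleteSpace E] {μ : Measure α} {p : ℝ≥0∞} [Fact (1 ≤ p)]
    {f : ℕ → α → E} (hf : ∀ n, MemLp (f n) p μ)
    (happrox : ∀ δ > 0, ∃ K : Set (Lp E p μ), IsCompact K ∧
      ∀ n, ∃ k ∈ K, eLpNorm (fun a => f n a - k a) p μ ≤ ENNReal.ofReal δ) :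
    ∃ φ : ℕ → ℕ, StrictMono φ ∧ ∃ y : α → E,
      Tendsto (fun k => eLpNorm (fun a => f (φ k) a - y a) p μ) atTop (𝓝 0) := by
  set G : ℕ → Lp E p μ := fun n => (hf n).toLp
  have hedist (n : ℕ) (k : Lp E p μ) : edist (G n) k = eLpNorm (fun a => f n a - k a) p μ := by
    rw [Lp.edist_def]
    exact eLpNorm_congr_ae ((hf n).coeFn_toLp.sub EventuallyEq.rfl)
  have htb : TotallyBounded (range G) := totallyBounded_of_forall_exists_isCompact fun δ hδ => by
    obtain ⟨K, hK, hGK⟩ := happrox δ hδ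
    refine ⟨K, hK, forall_mem_range.2 fun n => ?_⟩
    obtain ⟨k, hk, hle⟩ := hGK n
    exact ⟨k, hk, (edist_le_ofReal hδ.le).1 (by rwa [hedist])⟩
  obtain ⟨y, -, φ, hφ, hy⟩ := (htb.closure.isCompact_of_isClosed isClosed_closure).tendsto_subseq
    fun n => subset_closure (mem_range_self n)
  exact ⟨φ, hφ, y, by simpa [hedist] using tendsto_iff_edist_tendsto_0.1 hy⟩

theorem exists_pos_nat_two_mul_rpow_inv_le {T Λ δ r : ℝ} (hT : 0 < T) (hΛ : 0 ≤ Λ) (hδ : 0 < δ)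
    (hr : 0 < r) (D : ℝ → ℝ) (hD : ∀ ε > 0, 0 ≤ D ε) :
    ∃ ε > 0, ∃ N : ℕ, 0 < N ∧ 2 * Λ * (T / N * D ε + T * ε ^ r) ^ r⁻¹ ≤ δ / 2 := by
  set κ := (δ / (4 * Λ + 1)) ^ r
  have hκ : 0 < κ := by positivity
  set ε := (κ / (2 * T)) ^ r⁻¹
  have hε : 0 < ε := by positivity
  have hTε : T * ε ^ r = κ / 2 := by
    rw [Real.rpow_inv_rpow (by positivity) hr.ne']
    field_simp
  obtain ⟨N, hND, hN⟩ := (((tendsto_const_div_atTop_nhds_zero_nat (T * D ε)).eventually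
    (gt_mem_nhds (half_pos hκ))).and (eventually_gt_atTop 0)).exists
  refine ⟨ε, hε, N, hN, ?_⟩
  have hA : T / N * D ε + T * ε ^ r ≤ κ := by
    rw [hTε, div_mul_eq_mul_div]
    linarith
  calc 2 * Λ * (T / N * D ε + T * ε ^ r) ^ r⁻¹ ≤ 2 * Λ * κ ^ r⁻¹ := by
        have hDε := hD ε hε
        gcongr
    _ = 2 * Λ * (δ / (4 * Λ + 1)) := by rw [Real.rpow_rpow_inv (by positivity) hr.ne']
    _ ≤ δ / 2 := by
        rw [← mul_div_assoc, div_le_div_iff₀ (by positivity) two_pos]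
        nlinarith

section Grid

def gridPt (T : ℝ) (N j : ℕ) : ℝ := T * j / N

def gridCell (T : ℝ) (N j : ℕ) : Set ℝ := Ioc (gridPt T N j) (gridPt T N (j + 1))

variable {T : ℝ} {N : ℕ}

@[simp] theorem gridPt_zero : gridPt T N 0 = 0 := by simp [gridPt]

theorem gridPt_self (hN : N ≠ 0) : gridPt T N N = T := by
  simp [gridPt, hN]

theorem gridPt_succ_sub (j : ℕ) : gridPt T N (j + 1) - gridPt T N j = T / N := by
  simp only [gridPt]; push_cast; ring

theorem monotone_gridPt (hT : 0 ≤ T) : Monotone (gridPt T N) := fun i j hij => by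
  unfold gridPt; gcongr

theorem gridPt_lt_succ (hT : 0 < T) (hN : 0 < N) (j : ℕ) :
    gridPt T N j < gridPt T N (j + 1) :=
  sub_pos.1 (by rw [gridPt_succ_sub]; positivity)

theorem measurableSet_gridCell (j : ℕ) : MeasurableSet (gridCell T N j) := measurableSet_Ioc

theorem volume_gridCell (j : ℕ) : volume (gridCell T N j) = ENNReal.ofReal (T / N) := by
  rw [gridCell, Real.volume_Ioc, gridPt_succ_sub]

theorem pairwise_disjoint_gridCell (hT : 0 ≤ T) :
    Pairwise (Function.onFun Disjoint (gridCell T N)) :=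
  (monotone_gridPt hT).pairwise_disjoint_on_Ioc_succ

theorem gridCell_subset_Ioc (hT : 0 ≤ T) {j : ℕ} (hj : j < N) : gridCell T N j ⊆ Ioc 0 T := by
  refine Ioc_subset_Ioc ?_ ?_
  · simpa using monotone_gridPt hT (Nat.zero_le j)
  · simpa [gridPt_self (Nat.ne_zero_of_lt hj)] using
      monotone_gridPt (N := N) hT (Nat.succ_le_of_lt hj)

theorem iUnion_gridCell (hT : 0 ≤ T) (hN : 0 < N) : ⋃ j : Fin N, gridCell T N j = Ioc 0 T := by
  refine subset_antisymm (iUnion_subset fun j => gridCell_subset_Ioc hT j.2) fun t ht => ?_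
  have ht' : t ∈ Ioc (gridPt T N 0) (gridPt T N N) := by rwa [gridPt_zero, gridPt_self hN.ne']
  obtain ⟨j, hj, htj⟩ := mem_iUnion₂.1 (Ioc_subset_biUnion_Ioc N _ ht')
  exact mem_iUnion.2 ⟨⟨j, Finset.mem_range.1 hj⟩, htj⟩

end Grid

section BV

variable {X : Type*} [NormedAddCommGroup X] {q T B : ℝ} {h : ℝ → X}

theorem sum_interleave_le_of_bvPowSums (hB : ∀ r ∈ bvPowSums q T h, r ≤ B) {N : ℕ} (hN : 0 < N)
    {c σ : ℕ → ℝ} (hc0 : c 0 = 0) (hcN : c N = T) (hσ : ∀ j < N, σ j ∈ Ioo (c j) (c (j + 1))) :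
    ∑ j ∈ Finset.range N, (‖h (σ j) - h (c j)‖ ^ q + ‖h (c (j + 1)) - h (σ j)‖ ^ q) ≤ B := by
  set u : ℕ → ℝ := fun i => if Even i then c (i / 2) else σ (i / 2)
  have hu_even (j : ℕ) : u (2 * j) = c j := by simp [u]
  have hu_odd (j : ℕ) : u (2 * j + 1) = σ j := by simp [u, Nat.add_div_of_dvd_right]
  have hu_succ (j : ℕ) : u (2 * j + 1 + 1) = c (j + 1) := by
    rw [show 2 * j + 1 + 1 = 2 * (j + 1) by ring, hu_even]
  refine hB _ ⟨2 * N, u, by omega, (hu_even 0).trans hc0, by rw [hu_even, hcN], fun i hi => ?_, ?_⟩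
  · obtain ⟨j, rfl | rfl⟩ := Nat.even_or_odd' i
    · rw [hu_even, hu_odd]; exact (hσ j (by omega)).1
    · rw [hu_odd, hu_succ]; exact (hσ j (by omega)).2
  · rw [Finset.sum_range_two_mul]
    simp only [hu_even, hu_odd, hu_succ]

variable {N : ℕ}

theorem sum_norm_sub_rpow_le_of_bvPowSums (hB : ∀ r ∈ bvPowSums q T h, r ≤ B) (hT : 0 < T)
    (hN : 0 < N) {J : Finset ℕ} (hJ : J ⊆ Finset.range N) {σ : ℕ → ℝ}
    (hσ : ∀ j ∈ J, σ j ∈ Ioo (gridPt T N j) (gridPt T N (j + 1))) :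
    ∑ j ∈ J, ‖h (gridPt T N (j + 1)) - h (σ j)‖ ^ q ≤ B := by
  classical
  set σ' : ℕ → ℝ := fun j => if j ∈ J then σ j else (gridPt T N j + gridPt T N (j + 1)) / 2
  have hσ' : ∀ j < N, σ' j ∈ Ioo (gridPt T N j) (gridPt T N (j + 1)) := by
    intro j _
    by_cases hj : j ∈ J
    · simpa [σ', hj] using hσ j hj
    · have hlt := gridPt_lt_succ hT hN j
      simp only [σ', hj, if_false, mem_Ioo]
      constructor <;> linarith
  refine le_trans ?_ (sum_interleave_le_of_bvPowSums hB hN gridPt_zero (gridPt_self hN.ne') hσ')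
  calc ∑ j ∈ J, ‖h (gridPt T N (j + 1)) - h (σ j)‖ ^ q
      = ∑ j ∈ J, ‖h (gridPt T N (j + 1)) - h (σ' j)‖ ^ q :=
        Finset.sum_congr rfl fun j hj => by simp [σ', hj]
    _ ≤ ∑ j ∈ Finset.range N, ‖h (gridPt T N (j + 1)) - h (σ' j)‖ ^ q :=
        Finset.sum_le_sum_of_subset_of_nonneg hJ fun _ _ _ => by positivity
    _ ≤ _ := Finset.sum_le_sum fun j _ => le_add_of_nonneg_left (by positivity)

theorem nonneg_of_bvPowSums_le (hB : ∀ r ∈ bvPowSums q T h, r ≤ B) (hT : 0 < T) : 0 ≤ B := by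
  simpa using sum_norm_sub_rpow_le_of_bvPowSums hB hT one_pos (J := ∅) (Finset.empty_subset _)
    (σ := fun _ => 0) (by simp)

theorem norm_sub_rpow_le_of_mem_gridCell (hB : ∀ r ∈ bvPowSums q T h, r ≤ B) (hq : 0 < q)
    (hT : 0 < T) {j : ℕ} (hj : j < N) {t : ℝ} (ht : t ∈ gridCell T N j) :
    ‖h t - h (gridPt T N (j + 1))‖ ^ q ≤ B := by
  rcases ht.2.lt_or_eq with hlt | rfl
  · rw [norm_sub_rev]
    simpa using sum_norm_sub_rpow_le_of_bvPowSums hB hT (Nat.zero_lt_of_lt hj)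
      (Finset.singleton_subset_iff.2 (Finset.mem_range.2 hj)) (σ := fun _ => t)
      (by simpa using ⟨ht.1, hlt⟩)
  · simpa [Real.zero_rpow hq.ne'] using nonneg_of_bvPowSums_le hB hT

/-- Measured from the right endpoint `b ∈ Ioc a b`: a point where `‖h t - h b‖` is positive lies
in `Ioo a b`, so such points interleave strictly with the grid in a partition of `[0, T]`. -/
def rightOsc (h : ℝ → X) (a b : ℝ) : ℝ := sSup ((fun t => ‖h t - h b‖) '' Ioc a b)

theorem norm_sub_le_rightOsc (hB : ∀ r ∈ bvPowSums q T h, r ≤ B) (hq : 0 < q) (hT : 0 < T)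
    {j : ℕ} (hj : j < N) {t : ℝ} (ht : t ∈ gridCell T N j) :
    ‖h t - h (gridPt T N (j + 1))‖ ≤ rightOsc h (gridPt T N j) (gridPt T N (j + 1)) := by
  refine le_csSup ⟨B ^ q⁻¹, forall_mem_image.2 fun s hs => ?_⟩ (mem_image_of_mem _ ht)
  exact (Real.le_rpow_inv_iff_of_pos (norm_nonneg _) (nonneg_of_bvPowSums_le hB hT) hq).2
    (norm_sub_rpow_le_of_mem_gridCell hB hq hT hj hs)

theorem rightOsc_le (hB : ∀ r ∈ bvPowSums q T h, r ≤ B) (hq : 0 < q) (hT : 0 < T)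
    {j : ℕ} (hj : j < N) : rightOsc h (gridPt T N j) (gridPt T N (j + 1)) ≤ B ^ q⁻¹ :=
  csSup_le ((nonempty_Ioc.2 (gridPt_lt_succ hT (Nat.zero_lt_of_lt hj) j)).image _) <|
    forall_mem_image.2 fun _ hs =>
      (Real.le_rpow_inv_iff_of_pos (norm_nonneg _) (nonneg_of_bvPowSums_le hB hT) hq).2
        (norm_sub_rpow_le_of_mem_gridCell hB hq hT hj hs)

theorem rightOsc_nonneg (hB : ∀ r ∈ bvPowSums q T h, r ≤ B) (hq : 0 < q) (hT : 0 < T)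
    {j : ℕ} (hj : j < N) : 0 ≤ rightOsc h (gridPt T N j) (gridPt T N (j + 1)) := by
  simpa using norm_sub_le_rightOsc hB hq hT hj
    (right_mem_Ioc.2 (gridPt_lt_succ hT (Nat.zero_lt_of_lt hj) j))

theorem card_lt_rightOsc_mul_le (hB : ∀ r ∈ bvPowSums q T h, r ≤ B) (hq : 0 < q) (hT : 0 < T)
    (hN : 0 < N) {ε : ℝ} (hε : 0 < ε) :
    ((Finset.range N).filter fun j => ε < rightOsc h (gridPt T N j) (gridPt T N (j + 1))).card *
      ε ^ q ≤ B := by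
  set J := (Finset.range N).filter fun j => ε < rightOsc h (gridPt T N j) (gridPt T N (j + 1))
  have hwit : ∀ j ∈ J, ∃ s ∈ Ioo (gridPt T N j) (gridPt T N (j + 1)),
      ε < ‖h (gridPt T N (j + 1)) - h s‖ := by
    intro j hj
    obtain ⟨-, ⟨s, hs, rfl⟩, hεs⟩ :=
      exists_lt_of_lt_csSup ((nonempty_Ioc.2 (gridPt_lt_succ hT hN j)).image _)
        (Finset.mem_filter.1 hj).2
    refine ⟨s, ⟨hs.1, hs.2.lt_of_ne fun hsb => ?_⟩, by rwa [norm_sub_rev]⟩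
    simp only [hsb, sub_self, norm_zero] at hεs
    linarith
  choose! σ hσ hεσ using hwit
  calc (J.card : ℝ) * ε ^ q ≤ ∑ j ∈ J, ‖h (gridPt T N (j + 1)) - h (σ j)‖ ^ q := by
        rw [← nsmul_eq_mul]
        exact Finset.card_nsmul_le_sum _ _ _ fun j hj =>
          Real.rpow_le_rpow hε.le (hεσ j hj).le hq.le
    _ ≤ B := sum_norm_sub_rpow_le_of_bvPowSums hB hT hN (Finset.filter_subset _ _) hσ

theorem sum_rightOsc_rpow_le (hB : ∀ r ∈ bvPowSums q T h, r ≤ B) (hq : 0 < q) (hT : 0 < T)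
    (hN : 0 < N) {ε r : ℝ} (hε : 0 < ε) (hr : 0 < r) :
    ∑ j ∈ Finset.range N, rightOsc h (gridPt T N j) (gridPt T N (j + 1)) ^ r ≤
      B / ε ^ q * (B ^ q⁻¹) ^ r + N * ε ^ r := by
  classical
  set J := (Finset.range N).filter fun j => ε < rightOsc h (gridPt T N j) (gridPt T N (j + 1))
  calc ∑ j ∈ Finset.range N, rightOsc h (gridPt T N j) (gridPt T N (j + 1)) ^ r
      ≤ ∑ j ∈ Finset.range N, ((if j ∈ J then (B ^ q⁻¹) ^ r else 0) + ε ^ r) := by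
        refine Finset.sum_le_sum fun j hj => ?_
        have hjN := Finset.mem_range.1 hj
        have hρ := rightOsc_nonneg hB hq hT hjN
        split_ifs with hjJ
        · exact le_add_of_le_of_nonneg
            (Real.rpow_le_rpow hρ (rightOsc_le hB hq hT hjN) hr.le) (by positivity)
        · rw [zero_add]
          exact Real.rpow_le_rpow hρ (not_lt.1 fun h => hjJ (Finset.mem_filter.2 ⟨hj, h⟩)) hr.le
    _ = J.card * (B ^ q⁻¹) ^ r + N * ε ^ r := by
        rw [Finset.sum_add_distrib, Finset.sum_ite_mem,
          Finset.inter_eq_right.2 (Finset.filter_subset _ _), Finset.sum_const, Finset.sum_const,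
          Finset.card_range, nsmul_eq_mul, nsmul_eq_mul]
    _ ≤ B / ε ^ q * (B ^ q⁻¹) ^ r + N * ε ^ r := by
        have hB0 := nonneg_of_bvPowSums_le hB hT
        gcongr
        rw [le_div_iff₀ (by positivity)]
        exact card_lt_rightOsc_mul_le hB hq hT hN hε

end BV

section StepFn

variable {E : Type*} [NormedAddCommGroup E] {p : ℝ≥0∞} {T : ℝ} {N : ℕ}

theorem setLIntegral_Ioc_eq_sum_gridCell (hT : 0 ≤ T) (hN : 0 < N) (f : ℝ → ℝ≥0∞) :
    ∫⁻ t in Ioc 0 T, f t = ∑ j : Fin N, ∫⁻ t in gridCell T N j, f t := by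
  rw [← iUnion_gridCell hT hN, lintegral_iUnion (fun j : Fin N => measurableSet_gridCell j)
    (fun i j hij => pairwise_disjoint_gridCell hT (Fin.val_injective.ne hij)), tsum_fintype]

def stepFn (T : ℝ) (N : ℕ) (w : Fin N → E) (t : ℝ) : E :=
  ∑ j : Fin N, (gridCell T N j).indicator (fun _ => w j) t

theorem stepFn_eq_of_mem (hT : 0 ≤ T) (w : Fin N → E) {j : Fin N} {t : ℝ}
    (ht : t ∈ gridCell T N j) : stepFn T N w t = w j := by
  rw [stepFn, Finset.sum_eq_single j (fun i _ hij => indicator_of_notMem (fun hi =>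
    Set.disjoint_left.1 (pairwise_disjoint_gridCell hT (Fin.val_injective.ne hij)) hi ht) _)
    (by simp), indicator_of_mem ht]

theorem stronglyMeasurable_stepFn (w : Fin N → E) : StronglyMeasurable (stepFn T N w) :=
  Finset.stronglyMeasurable_fun_sum _ fun j _ =>
    stronglyMeasurable_const.indicator (measurableSet_gridCell j)

theorem eLpNorm_stepFn (hp0 : p ≠ 0) (hp : p ≠ ∞) (hT : 0 ≤ T) (hN : 0 < N)
    (w : Fin N → E) :
    eLpNorm (stepFn T N w) p (volume.restrict (Ioc 0 T)) =
      (ENNReal.ofReal (T / N) * ∑ j, ‖w j‖ₑ ^ p.toReal) ^ (1 / p.toReal) := by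
  rw [eLpNorm_eq_lintegral_rpow_enorm_toReal hp0 hp, setLIntegral_Ioc_eq_sum_gridCell hT hN,
    Finset.mul_sum]
  congr 1
  refine Finset.sum_congr rfl fun j _ => ?_
  rw [setLIntegral_congr_fun (measurableSet_gridCell j) fun t ht => by
      rw [stepFn_eq_of_mem hT w ht],
    setLIntegral_const, volume_gridCell, mul_comm]

theorem exists_eLpNorm_stepFn_comp_le (hp0 : p ≠ 0) (hp : p ≠ ∞) (hT : 0 < T)
    (hN : 0 < N) {x : ℝ → E} (hx : AEStronglyMeasurable x (volume.restrict (Ioc 0 T))) :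
    ∃ τ : Fin N → ℝ, (∀ j : Fin N, τ j ∈ gridCell T N j) ∧
      eLpNorm (stepFn T N (x ∘ τ)) p (volume.restrict (Ioc 0 T)) ≤
        eLpNorm x p (volume.restrict (Ioc 0 T)) := by
  have hsel : ∀ j : Fin N, ∃ t ∈ gridCell T N j, ‖x t‖ₑ ^ p.toReal * ENNReal.ofReal (T / N) ≤
      ∫⁻ s in gridCell T N j, ‖x s‖ₑ ^ p.toReal := fun j => by
    rw [← volume_gridCell j]
    have hxj : AEStronglyMeasurable x (volume.restrict (gridCell T N j)) :=
      hx.mono_measure (Measure.restrict_mono (gridCell_subset_Ioc hT.le j.2) le_rfl)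
    exact exists_mul_measure_le_setLIntegral (measurableSet_gridCell j)
      (by simp [volume_gridCell, hT, hN]) (by simp [volume_gridCell]) (hxj.enorm.pow_const _)
  choose τ hτ hτle using hsel
  refine ⟨τ, hτ, ?_⟩
  rw [eLpNorm_stepFn hp0 hp hT.le hN, eLpNorm_eq_lintegral_rpow_enorm_toReal hp0 hp,
    setLIntegral_Ioc_eq_sum_gridCell hT.le hN, Finset.mul_sum]
  gcongr with j
  rw [mul_comm]
  exact hτle j

def stepLp (p : ℝ≥0∞) (T : ℝ) (N : ℕ) (w : Fin N → E) : Lp E p (volume.restrict (Ioc 0 T)) :=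
  ∑ j : Fin N, indicatorConstLp p (measurableSet_gridCell (T := T) (N := N) j)
    (measure_ne_top _ _) (w j)

theorem stepLp_ae_eq (w : Fin N → E) :
    stepLp p T N w =ᵐ[volume.restrict (Ioc 0 T)] stepFn T N w := by
  unfold stepLp
  refine (Lp.coeFn_fun_finsetSum _ _).trans ?_
  filter_upwards [ae_all_iff.2 fun j : Fin N =>
    indicatorConstLp_coeFn (p := p) (hs := measurableSet_gridCell (T := T) (N := N) j)
      (hμs := measure_ne_top _ _) (c := w j)] with t ht
  simp [ht, stepFn]

theorem continuous_stepLp [Fact (1 ≤ p)] :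
    Continuous (stepLp p T N : (Fin N → E) → Lp E p (volume.restrict (Ioc 0 T))) := by
  unfold stepLp
  exact continuous_finsetSum _ fun j _ =>
    (continuous_indicatorConstLp _ _).comp (continuous_apply j)

theorem norm_le_of_eLpNorm_stepFn_le (hp0 : p ≠ 0) (hp : p ≠ ∞) (hT : 0 < T) (hN : 0 < N)
    {w : Fin N → E} {C : ℝ} (hC : 0 ≤ C)
    (hw : eLpNorm (stepFn T N w) p (volume.restrict (Ioc 0 T)) ≤ ENNReal.ofReal C) (j : Fin N) :
    ‖w j‖ ≤ (N / T * C ^ p.toReal) ^ p.toReal⁻¹ := by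
  have hr : 0 < p.toReal := ENNReal.toReal_pos hp0 hp
  have hsingle : ENNReal.ofReal (T / N) * ‖w j‖ₑ ^ p.toReal ≤ ENNReal.ofReal C ^ p.toReal :=
    calc ENNReal.ofReal (T / N) * ‖w j‖ₑ ^ p.toReal
        ≤ ENNReal.ofReal (T / N) * ∑ i, ‖w i‖ₑ ^ p.toReal := by
          gcongr
          exact Finset.single_le_sum (f := fun i => ‖w i‖ₑ ^ p.toReal) (fun _ _ => zero_le)
            (Finset.mem_univ j)
      _ = eLpNorm (stepFn T N w) p (volume.restrict (Ioc 0 T)) ^ p.toReal := by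
          rw [eLpNorm_stepFn hp0 hp hT.le hN, ← ENNReal.rpow_mul, one_div_mul_cancel hr.ne',
            ENNReal.rpow_one]
      _ ≤ ENNReal.ofReal C ^ p.toReal := by gcongr
  rw [← ofReal_norm, ENNReal.ofReal_rpow_of_nonneg (norm_nonneg _) hr.le,
    ENNReal.ofReal_rpow_of_nonneg hC hr.le, ← ENNReal.ofReal_mul (by positivity),
    ENNReal.ofReal_le_ofReal_iff (by positivity)] at hsingle
  rw [Real.le_rpow_inv_iff_of_pos (norm_nonneg _) (by positivity) hr]
  calc ‖w j‖ ^ p.toReal = N / T * (T / N * ‖w j‖ ^ p.toReal) := by field_simp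
    _ ≤ N / T * C ^ p.toReal := by gcongr

theorem eLpNorm_stepFn_rightOsc_le {X : Type*} [NormedAddCommGroup X] {h : ℝ → X} {q B ε : ℝ}
    (hB : ∀ r ∈ bvPowSums q T h, r ≤ B) (hq : 0 < q) (hT : 0 < T) (hN : 0 < N) (hp0 : p ≠ 0)
    (hp : p ≠ ∞) (hε : 0 < ε) :
    eLpNorm (stepFn T N fun j : Fin N => rightOsc h (gridPt T N j) (gridPt T N (j + 1))) p
        (volume.restrict (Ioc 0 T)) ≤
      ENNReal.ofReal ((T / N * (B / ε ^ q * (B ^ q⁻¹) ^ p.toReal) + T * ε ^ p.toReal) ^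
        p.toReal⁻¹) := by
  set ρ : ℕ → ℝ := fun j => rightOsc h (gridPt T N j) (gridPt T N (j + 1))
  have hr : 0 < p.toReal := ENNReal.toReal_pos hp0 hp
  have hρ (j : Fin N) : 0 ≤ ρ j := rightOsc_nonneg hB hq hT j.2
  have hsum : 0 ≤ ∑ j : Fin N, ρ j ^ p.toReal :=
    Finset.sum_nonneg fun j _ => Real.rpow_nonneg (hρ j) _
  rw [eLpNorm_stepFn hp0 hp hT.le hN, one_div]
  calc (ENNReal.ofReal (T / N) * ∑ j : Fin N, ‖ρ j‖ₑ ^ p.toReal) ^ p.toReal⁻¹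
      = ENNReal.ofReal ((T / N * ∑ j : Fin N, ρ j ^ p.toReal) ^ p.toReal⁻¹) := by
        rw [← ENNReal.ofReal_rpow_of_nonneg (by positivity) (by positivity),
          ENNReal.ofReal_mul (by positivity),
          ENNReal.ofReal_sum_of_nonneg fun j _ => Real.rpow_nonneg (hρ j) _]
        simp_rw [Real.enorm_of_nonneg (hρ _), ENNReal.ofReal_rpow_of_nonneg (hρ _) hr.le]
    _ ≤ _ := by
        refine ENNReal.ofReal_le_ofReal (Real.rpow_le_rpow (by positivity) ?_ (by positivity))
        calc T / N * ∑ j : Fin N, ρ j ^ p.toReal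
            = T / N * ∑ j ∈ Finset.range N, ρ j ^ p.toReal := by
              rw [Fin.sum_univ_eq_sum_range (fun j => ρ j ^ p.toReal)]
          _ ≤ T / N * (B / ε ^ q * (B ^ q⁻¹) ^ p.toReal + N * ε ^ p.toReal) := by
              gcongr
              exact sum_rightOsc_rpow_le hB hq hT hN hε hr
          _ = _ := by field_simp

end StepFn

section Approximation

variable {X₁ X₂ X₃ : Type*}
  [NormedAddCommGroup X₁] [NormedSpace ℝ X₁] [NormedAddCommGroup X₂] [NormedSpace ℝ X₂]
  [NormedAddCommGroup X₃] [NormedSpace ℝ X₃] {e₁₂ : X₁ →L[ℝ] X₂} {e₂₃ : X₂ →L[ℝ] X₃}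
  {p : ℝ≥0∞} {q T B η Λ : ℝ} {N : ℕ} {x : ℝ → X₁}

theorem norm_sub_stepFn_le (hE : ∀ v, ‖e₁₂ v‖ ≤ η * ‖v‖ + Λ * ‖e₂₃ (e₁₂ v)‖) (hΛ : 0 ≤ Λ)
    (hB : ∀ r ∈ bvPowSums q T (fun t => e₂₃ (e₁₂ (x t))), r ≤ B) (hq : 0 < q) (hT : 0 < T)
    (hN : 0 < N) {τ : Fin N → ℝ} (hτ : ∀ j : Fin N, τ j ∈ gridCell T N j) {t : ℝ}
    (ht : t ∈ Ioc 0 T) :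
    ‖e₁₂ (x t) - stepFn T N (fun j => e₁₂ (x (τ j))) t‖ ≤
      η * ‖x t - stepFn T N (x ∘ τ) t‖ + 2 * Λ * stepFn T N (fun j : Fin N =>
        rightOsc (fun t => e₂₃ (e₁₂ (x t))) (gridPt T N j) (gridPt T N (j + 1))) t := by
  rw [← iUnion_gridCell hT.le hN] at ht
  obtain ⟨j, htj⟩ := mem_iUnion.1 ht
  simp only [stepFn_eq_of_mem hT.le _ htj, Function.comp_apply]
  set h := fun t => e₂₃ (e₁₂ (x t))
  have hosc : ‖h t - h (τ j)‖ ≤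
      2 * rightOsc h (gridPt T N j) (gridPt T N (j + 1)) := by
    refine (norm_sub_le_norm_sub_add_norm_sub _ (h (gridPt T N (j + 1))) _).trans ?_
    rw [norm_sub_rev (h (gridPt T N (j + 1))), two_mul]
    exact add_le_add (norm_sub_le_rightOsc hB hq hT j.2 htj)
      (norm_sub_le_rightOsc hB hq hT j.2 (hτ j))
  calc ‖e₁₂ (x t) - e₁₂ (x (τ j))‖ ≤ η * ‖x t - x (τ j)‖ + Λ * ‖h t - h (τ j)‖ := by
        simpa only [map_sub, h] using hE (x t - x (τ j))
    _ ≤ _ := by rw [mul_comm 2 Λ, mul_assoc]; gcongr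

theorem eLpNorm_sub_stepFn_le (hE : ∀ v, ‖e₁₂ v‖ ≤ η * ‖v‖ + Λ * ‖e₂₃ (e₁₂ v)‖) (hη : 0 ≤ η)
    (hΛ : 0 ≤ Λ) (hB : ∀ r ∈ bvPowSums q T (fun t => e₂₃ (e₁₂ (x t))), r ≤ B) (hq : 0 < q)
    (hT : 0 < T) (hN : 0 < N) {τ : Fin N → ℝ} (hτ : ∀ j : Fin N, τ j ∈ gridCell T N j)
    (hp : 1 ≤ p) (hx : AEStronglyMeasurable x (volume.restrict (Ioc 0 T))) :
    eLpNorm (fun t => e₁₂ (x t) - stepFn T N (fun j => e₁₂ (x (τ j))) t) p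
        (volume.restrict (Ioc 0 T)) ≤
      ENNReal.ofReal η * eLpNorm (fun t => x t - stepFn T N (x ∘ τ) t) p
          (volume.restrict (Ioc 0 T)) +
        ENNReal.ofReal (2 * Λ) * eLpNorm (stepFn T N fun j : Fin N =>
          rightOsc (fun t => e₂₃ (e₁₂ (x t))) (gridPt T N j) (gridPt T N (j + 1))) p
          (volume.restrict (Ioc 0 T)) := by
  set ρ : Fin N → ℝ := fun j =>
    rightOsc (fun t => e₂₃ (e₁₂ (x t))) (gridPt T N j) (gridPt T N (j + 1))
  have hsub : AEStronglyMeasurable (fun t => x t - stepFn T N (x ∘ τ) t)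
      (volume.restrict (Ioc 0 T)) := hx.sub (stronglyMeasurable_stepFn _).aestronglyMeasurable
  have hsmul (c : ℝ) (hc : 0 ≤ c) (f : ℝ → ℝ) : eLpNorm (fun t => c * f t) p
      (volume.restrict (Ioc 0 T)) = ENNReal.ofReal c * eLpNorm f p (volume.restrict (Ioc 0 T)) := by
    rw [← Real.enorm_of_nonneg hc, ← eLpNorm_const_smul]
    rfl
  calc _ ≤ eLpNorm (fun t => η * ‖x t - stepFn T N (x ∘ τ) t‖ + 2 * Λ * stepFn T N ρ t) p
        (volume.restrict (Ioc 0 T)) :=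
        eLpNorm_mono_ae_real ((ae_restrict_iff' measurableSet_Ioc).2 (ae_of_all _ fun t ht =>
          norm_sub_stepFn_le hE hΛ hB hq hT hN hτ ht))
    _ ≤ _ := (eLpNorm_add_le (hsub.norm.const_mul _)
        ((stronglyMeasurable_stepFn _).aestronglyMeasurable.const_mul _) hp).trans_eq <| by
        rw [hsmul η hη, hsmul (2 * Λ) (by positivity), eLpNorm_norm]

theorem exists_eLpNorm_sub_stepFn_le (hE : ∀ v, ‖e₁₂ v‖ ≤ η * ‖v‖ + Λ * ‖e₂₃ (e₁₂ v)‖)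
    (hη : 0 ≤ η) (hΛ : 0 ≤ Λ) (hp : 1 ≤ p) (hp_top : p ≠ ∞) (hq : 0 < q) (hT : 0 < T)
    (hN : 0 < N) (hx : AEStronglyMeasurable x (volume.restrict (Ioc 0 T))) {C : ℝ} (hC : 0 ≤ C)
    (hxC : eLpNorm x p (volume.restrict (Ioc 0 T)) ≤ ENNReal.ofReal C)
    (hB : ∀ r ∈ bvPowSums q T (fun t => e₂₃ (e₁₂ (x t))), r ≤ B) {ε : ℝ} (hε : 0 < ε) :
    ∃ τ : Fin N → ℝ,
      eLpNorm (stepFn T N (x ∘ τ)) p (volume.restrict (Ioc 0 T)) ≤ ENNReal.ofReal C ∧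
      eLpNorm (fun t => e₁₂ (x t) - stepFn T N (fun j => e₁₂ (x (τ j))) t) p
          (volume.restrict (Ioc 0 T)) ≤
        ENNReal.ofReal (2 * η * C + 2 * Λ *
          (T / N * (B / ε ^ q * (B ^ q⁻¹) ^ p.toReal) + T * ε ^ p.toReal) ^ p.toReal⁻¹) := by
  have hp0 : p ≠ 0 := (zero_lt_one.trans_le hp).ne'
  have hB0 := nonneg_of_bvPowSums_le hB hT
  obtain ⟨τ, hτ, hτx⟩ := exists_eLpNorm_stepFn_comp_le hp0 hp_top hT hN hx
  refine ⟨τ, hτx.trans hxC, (eLpNorm_sub_stepFn_le hE hη hΛ hB hq hT hN hτ hp hx).trans ?_⟩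
  have hdiff : eLpNorm (fun t => x t - stepFn T N (x ∘ τ) t) p (volume.restrict (Ioc 0 T)) ≤
      ENNReal.ofReal (2 * C) := by
    rw [two_mul, ENNReal.ofReal_add hC hC]
    exact (eLpNorm_sub_le hx (stronglyMeasurable_stepFn _).aestronglyMeasurable hp).trans
      (add_le_add hxC (hτx.trans hxC))
  calc _ ≤ ENNReal.ofReal η * ENNReal.ofReal (2 * C) + ENNReal.ofReal (2 * Λ) *
        ENNReal.ofReal ((T / N * (B / ε ^ q * (B ^ q⁻¹) ^ p.toReal) + T * ε ^ p.toReal) ^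
          p.toReal⁻¹) := by
        gcongr
        exact eLpNorm_stepFn_rightOsc_le hB hq hT hN hp0 hp_top hε
    _ = _ := by
        rw [← ENNReal.ofReal_mul hη, ← ENNReal.ofReal_mul (by positivity),
          ← ENNReal.ofReal_add (by positivity) (by positivity)]
        ring_nf

theorem exists_isCompact_forall_eLpNorm_sub_le (he₁₂ : MapsBoundedToRelCompact e₁₂)
    (he₂₃ : Function.Injective e₂₃) [Fact (1 ≤ p)] (hp : p ≠ ∞) (hq : 0 < q) (hT : 0 < T)
    {x : ℕ → ℝ → X₁} (hx : ∀ n, AEStronglyMeasurable (x n) (volume.restrict (Ioc 0 T)))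
    {C : ℝ} (hC : 0 ≤ C)
    (hxC : ∀ n, eLpNorm (x n) p (volume.restrict (Ioc 0 T)) ≤ ENNReal.ofReal C)
    (hB : ∀ n, ∀ r ∈ bvPowSums q T (fun t => e₂₃ (e₁₂ (x n t))), r ≤ B) {δ : ℝ} (hδ : 0 < δ) :
    ∃ K : Set (Lp X₂ p (volume.restrict (Ioc 0 T))), IsCompact K ∧
      ∀ n, ∃ k ∈ K, eLpNorm (fun t => e₁₂ (x n t) - k t) p (volume.restrict (Ioc 0 T)) ≤
        ENNReal.ofReal δ := by
  have hp1 : 1 ≤ p := Fact.out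
  have hp0 : p ≠ 0 := (zero_lt_one.trans_le hp1).ne'
  have hr : 0 < p.toReal := ENNReal.toReal_pos hp0 hp
  obtain ⟨Λ, hΛ, hE⟩ :=
    he₁₂.exists_norm_le_mul_norm_add_mul_norm he₂₃ (η := δ / (4 * C + 1)) (by positivity)
  obtain ⟨ε, hε, N, hN, hεN⟩ := exists_pos_nat_two_mul_rpow_inv_le hT hΛ hδ hr
    (fun ε => B / ε ^ q * (B ^ q⁻¹) ^ p.toReal) fun ε hε => by
      have hB0 := nonneg_of_bvPowSums_le (hB 0) hT
      positivity
  set R := (N / T * C ^ p.toReal) ^ p.toReal⁻¹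
  refine ⟨stepLp p T N '' univ.pi fun _ => closure (e₁₂ '' Metric.closedBall 0 R),
    (isCompact_univ_pi fun _ => he₁₂ _ Metric.isBounded_closedBall).image continuous_stepLp,
    fun n => ?_⟩
  obtain ⟨τ, hτC, herr⟩ :=
    exists_eLpNorm_sub_stepFn_le hE (by positivity) hΛ hp1 hp hq hT hN (hx n) hC (hxC n) (hB n) hε
  refine ⟨stepLp p T N fun j => e₁₂ (x n (τ j)), mem_image_of_mem _ fun j _ =>
    subset_closure (mem_image_of_mem _ (mem_closedBall_zero_iff.2
      (norm_le_of_eLpNorm_stepFn_le hp0 hp hT hN hC hτC j))), ?_⟩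
  have hη : 2 * (δ / (4 * C + 1)) * C ≤ δ / 2 := by
    rw [show 2 * (δ / (4 * C + 1)) * C = 2 * C * δ / (4 * C + 1) by ring,
      div_le_div_iff₀ (by positivity) two_pos]
    nlinarith
  calc _ = eLpNorm (fun t => e₁₂ (x n t) - stepFn T N (fun j => e₁₂ (x n (τ j))) t) p
        (volume.restrict (Ioc 0 T)) := eLpNorm_congr_ae <| by
          filter_upwards [stepLp_ae_eq (p := p) fun j => e₁₂ (x n (τ j))] with t ht
          rw [ht]
    _ ≤ ENNReal.ofReal δ := herr.trans (ENNReal.ofReal_le_ofReal (by linarith))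

end Approximation

theorem Mpq_compact_embedding_general
    {X₁ X₂ X₃ : Type*}
    [NormedAddCommGroup X₁] [NormedSpace ℝ X₁]
    [NormedAddCommGroup X₂] [NormedSpace ℝ X₂] [CompleteSpace X₂]
    [NormedAddCommGroup X₃] [NormedSpace ℝ X₃]
    (e₁₂ : X₁ →L[ℝ] X₂)
    (he₁₂_cpt : MapsBoundedToRelCompact e₁₂)
    (e₂₃ : X₂ →L[ℝ] X₃) (he₂₃_inj : Function.Injective e₂₃)
    (p q : ℝ) (hp : 1 ≤ p) (hq : 1 ≤ q)
    (T : ℝ) (hT : 0 < T)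
    (x : ℕ → ℝ → X₁)
    (hx_mem : ∀ n, MemLp (x n) (ENNReal.ofReal p) (volume.restrict (Ioc (0 : ℝ) T)))
    (C : ℝ)
    (hx_Lp : ∀ n, eLpNorm (x n) (ENNReal.ofReal p) (volume.restrict (Ioc (0 : ℝ) T)) ≤
      ENNReal.ofReal C)
    (hx_BV : ∀ n, ∀ r ∈ bvPowSums q T (fun t => e₂₃ (e₁₂ (x n t))), r ≤ C ^ q) :
    ∃ φ : ℕ → ℕ, StrictMono φ ∧ ∃ y : ℝ → X₂,
      Tendsto (fun k => eLpNorm (fun t => e₁₂ (x (φ k) t) - y t) (ENNReal.ofReal p)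
        (volume.restrict (Ioc (0 : ℝ) T))) atTop (𝓝 0) := by
  have : Fact (1 ≤ ENNReal.ofReal p) := ⟨by simpa using ENNReal.ofReal_le_ofReal hp⟩
  refine exists_subseq_tendsto_eLpNorm_of_forall_isCompact (f := fun n t => e₁₂ (x n t))
    (fun n => e₁₂.comp_memLp' (hx_mem n)) fun δ hδ => ?_
  exact exists_isCompact_forall_eLpNorm_sub_le he₁₂_cpt he₂₃_inj ENNReal.ofReal_ne_top
    (by linarith) hT (fun n => (hx_mem n).1) (le_max_right C 0)
    (fun n => (hx_Lp n).trans (ENNReal.ofReal_le_ofReal (le_max_left C 0))) hx_BV hδ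

/-- **Compact embedding of `M^{p,q}(0,T;X₁,X₃)` into `L^p(0,T;X₂)`.** Let `1 ≤ p, q < ∞`,
`T > 0` and `X₁ ⊂ X₂ ⊂ X₃` real Banach spaces with `X₁` reflexive, the embedding `X₁ ⊂ X₂`
compact and the embedding `X₂ ⊂ X₃` continuous. Then every sequence `(xₙ)` of functions
`[0,T] → X₁` with `‖xₙ‖_{L^p(0,T;X₁)} + ‖xₙ‖_{BV^q(0,T;X₃)}` uniformly bounded has a
subsequence converging strongly in `L^p(0,T;X₂)`. -/
theorem Mpq_compact_embedding
    {X₁ X₂ X₃ : Type*}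
    [NormedAddCommGroup X₁] [NormedSpace ℝ X₁] [CompleteSpace X₁]
    [NormedAddCommGroup X₂] [NormedSpace ℝ X₂] [CompleteSpace X₂]
    [NormedAddCommGroup X₃] [NormedSpace ℝ X₃] [CompleteSpace X₃]
    (hX₁_refl : Function.Surjective (NormedSpace.inclusionInDoubleDual ℝ X₁))
    (e₁₂ : X₁ →L[ℝ] X₂) (he₁₂_inj : Function.Injective e₁₂)
    (he₁₂_cpt : MapsBoundedToRelCompact e₁₂)
    (e₂₃ : X₂ →L[ℝ] X₃) (he₂₃_inj : Function.Injective e₂₃)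
    (p q : ℝ) (hp : 1 ≤ p) (hq : 1 ≤ q)
    (T : ℝ) (hT : 0 < T)
    (x : ℕ → ℝ → X₁)
    (hx_mem : ∀ n, MemLp (x n) (ENNReal.ofReal p) (volume.restrict (Ioc (0 : ℝ) T)))
    (C : ℝ)
    (hx_Lp : ∀ n, eLpNorm (x n) (ENNReal.ofReal p) (volume.restrict (Ioc (0 : ℝ) T)) ≤
      ENNReal.ofReal C)
    (hx_BV : ∀ n, ∀ r ∈ bvPowSums q T (fun t => e₂₃ (e₁₂ (x n t))), r ≤ C ^ q) :
    ∃ φ : ℕ → ℕ, StrictMono φ ∧ ∃ y : ℝ → X₂,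
      Tendsto (fun k => eLpNorm (fun t => e₁₂ (x (φ k) t) - y t) (ENNReal.ofReal p)
        (volume.restrict (Ioc (0 : ℝ) T))) atTop (𝓝 0) :=
  Mpq_compact_embedding_general e₁₂ he₁₂_cpt e₂₃ he₂₃_inj p q hp hq T hT x hx_mem C hx_Lp hx_BV
end
end

section
/- Aubin–Cellina convergence theorem: Let X and Y be real Banach spaces and F : X → 2^Y a multifunction whose values are nonempty, closed and convex subsets of Y, and which is upper semicontinuous from X (strong topology) into Y endowed with the weak topology. Let T > 0 and let xₙ : (0,T) → X, yₙ : (0,T) → Y, n ∈ ℕ, be measurable functions such that xₙ(t) → x(t) for almost every t ∈ (0,T) for some function x : (0,T) → X, yₙ → y weakly in L¹(0,T;Y) for some y : (0,T) → Y, and yₙ(t) ∈ F(xₙ(t)) for all n ∈ ℕ and almost all t ∈ (0,T). Then y(t) ∈ F(x(t)) for almost every t ∈ (0,T). -/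
/-!
Fix a point `t₀` that is a Lebesgue point of `ylim` and a density point of each set in a
countable family `{t | ∀ n ≥ N, dist (xₙ t) q < r}` containing it (`q` in a countable set dense
in the essential range of `xlim`, `r` rational). If `ylim t₀ ∉ F (xlim t₀)`, Hahn–Banach gives
`p ∈ Y*` and `σ < p (ylim t₀)` with `F (xlim t₀) ⊆ {p < σ}`. Upper semicontinuity gives `δ` with
`F ⊆ {p < σ}` on the `δ`-ball around `xlim t₀`, and one set `A` of the family keeps `xₙ` in that
ball for `n ≥ N`. Hence `∫_{A ∩ a} p ∘ yₙ ≤ σ μ(A ∩ a)`, which survives the weak limit (test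
against `p · 1_{A ∩ a}`). Shrinking `a` to `t₀` along a Vitali family gives `p (ylim t₀) ≤ σ`.
-/

open Filter Topology MeasureTheory Set Metric
open scoped ENNReal

section LebesguePoint

variable {α E : Type*} [MeasurableSpace α] {μ : Measure α}
  [NormedAddCommGroup E] [NormedSpace ℝ E]

theorem measureReal_inter_mul_sub_le_integral_norm_sub {f : α → E} {A a : Set α}
    (hf : IntegrableOn f a μ) (ha : μ a ≠ ∞) (p : E →L[ℝ] ℝ) {σ : ℝ} (t₀ : α)
    (hle : ∫ s in A ∩ a, p (f s) ∂μ ≤ σ * μ.real (A ∩ a)) :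
    μ.real (A ∩ a) * (p (f t₀) - σ) ≤ ‖p‖ * ∫ s in a, ‖f s - f t₀‖ ∂μ := by
  have hAa : μ (A ∩ a) ≠ ∞ := measure_ne_top_of_subset inter_subset_right ha
  have hpf : IntegrableOn (fun s => p (f s)) (A ∩ a) μ :=
    IntegrableOn.mono_set (p.integrable_comp hf) inter_subset_right
  have hconst : IntegrableOn (fun _ => p (f t₀)) (A ∩ a) μ := integrableOn_const hAa
  have hnorm : IntegrableOn (fun s => ‖p‖ * ‖f s - f t₀‖) a μ :=
    ((hf.sub (integrableOn_const ha)).norm).const_mul _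
  calc μ.real (A ∩ a) * (p (f t₀) - σ)
      ≤ μ.real (A ∩ a) * p (f t₀) - ∫ s in A ∩ a, p (f s) ∂μ := by linarith
    _ = ∫ s in A ∩ a, (p (f t₀) - p (f s)) ∂μ := by
      rw [integral_sub hconst hpf, setIntegral_const, smul_eq_mul]
    _ ≤ ∫ s in A ∩ a, ‖p‖ * ‖f s - f t₀‖ ∂μ := by
      refine integral_mono (hconst.sub hpf)
        (hnorm.mono_set inter_subset_right) fun s => ?_
      rw [← map_sub, norm_sub_rev]
      exact (le_abs_self _).trans (p.le_opNorm _)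
    _ ≤ ∫ s in a, ‖p‖ * ‖f s - f t₀‖ ∂μ :=
      setIntegral_mono_set hnorm (ae_of_all _ fun s => by positivity)
        inter_subset_right.eventuallyLE
    _ = ‖p‖ * ∫ s in a, ‖f s - f t₀‖ ∂μ := integral_const_mul _ _

theorem apply_le_of_tendsto_average_norm_sub {l : Filter (Set α)} [l.NeBot] {f : α → E}
    {t₀ : α} {A : Set α} (p : E →L[ℝ] ℝ) {σ : ℝ} (hf : ∀ᶠ a in l, IntegrableOn f a μ)
    (hf_avg : Tendsto (fun a => ⨍ s in a, ‖f s - f t₀‖ ∂μ) l (𝓝 0))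
    (hA : Tendsto (fun a => μ (A ∩ a) / μ a) l (𝓝 1))
    (hle : ∀ᶠ a in l, ∫ s in A ∩ a, p (f s) ∂μ ≤ σ * μ.real (A ∩ a)) :
    p (f t₀) ≤ σ := by
  have hratio : Tendsto (fun a => μ.real (A ∩ a) / μ.real a) l (𝓝 1) := by
    simpa only [Function.comp_def, ENNReal.toReal_div, ENNReal.toReal_one,
      ← measureReal_def] using (ENNReal.tendsto_toReal ENNReal.one_ne_top).comp hA
  -- Since `x / 0 = 0`, a ratio near `1` forces `μ.real a ≠ 0`, so `μ a` is positive and finite.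
  have hpos : ∀ᶠ a in l, 0 < μ.real a := by
    filter_upwards [hratio.eventually_ne one_ne_zero] with a ha
    refine measureReal_nonneg.lt_of_ne fun h => ha ?_
    rw [← h, div_zero]
  have hbound : ∀ᶠ a in l, μ.real (A ∩ a) / μ.real a * (p (f t₀) - σ) ≤
      ‖p‖ * ⨍ s in a, ‖f s - f t₀‖ ∂μ := by
    filter_upwards [hf, hle, hpos] with a hfa hlea ha
    have ha_fin : μ a ≠ ∞ := fun h => by simp [measureReal_def, h] at ha
    calc μ.real (A ∩ a) / μ.real a * (p (f t₀) - σ)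
        ≤ (‖p‖ * ∫ s in a, ‖f s - f t₀‖ ∂μ) / μ.real a := by
          rw [div_mul_eq_mul_div]
          exact div_le_div_of_nonneg_right
            (measureReal_inter_mul_sub_le_integral_norm_sub hfa ha_fin p t₀ hlea) ha.le
      _ = ‖p‖ * ⨍ s in a, ‖f s - f t₀‖ ∂μ := by
          rw [setAverage_eq, smul_eq_mul, mul_div_assoc, inv_mul_eq_div]
  have hlim := le_of_tendsto_of_tendsto (hratio.mul_const _) (hf_avg.const_mul ‖p‖) hbound
  rw [one_mul, mul_zero] at hlim
  linarith

end LebesguePoint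

section WeakLimit

variable {α Y : Type*} [MeasurableSpace α] {μ : Measure α}
  [NormedAddCommGroup Y] [NormedSpace ℝ Y]

theorem integral_indicator_const_apply (B : Set α) (hB : MeasurableSet B) (p : Y →L[ℝ] ℝ)
    (f : α → Y) :
    ∫ t, B.indicator (fun _ => p) t (f t) ∂μ = ∫ t in B, p (f t) ∂μ := by
  rw [← integral_indicator hB]
  congr 1 with t
  by_cases ht : t ∈ B <;> simp [ht]

theorem setIntegral_le_of_weak_tendsto {y : ℕ → α → Y} {ylim : α → Y}
    (hy : ∀ n, Integrable (y n) μ)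
    (hweak : ∀ g : α → (Y →L[ℝ] ℝ), MemLp g ⊤ μ →
      Tendsto (fun n => ∫ t, g t (y n t) ∂μ) atTop (𝓝 (∫ t, g t (ylim t) ∂μ)))
    {B : Set α} (hB : MeasurableSet B) (hB_fin : μ B ≠ ∞) (p : Y →L[ℝ] ℝ) {σ : ℝ}
    (hle : ∀ᶠ n in atTop, ∀ᵐ t ∂μ, t ∈ B → p (y n t) ≤ σ) :
    ∫ t in B, p (ylim t) ∂μ ≤ σ * μ.real B := by
  have hg : MemLp (B.indicator fun _ => p) ⊤ μ := (memLp_top_const p).indicator hB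
  have hlim := hweak _ hg
  simp only [integral_indicator_const_apply B hB] at hlim
  refine le_of_tendsto hlim ?_
  filter_upwards [hle] with n hn
  calc ∫ t in B, p (y n t) ∂μ ≤ ∫ _ in B, σ ∂μ :=
        integral_mono_ae (p.integrable_comp (hy n)).integrableOn (integrableOn_const hB_fin)
          ((ae_restrict_iff' hB).2 hn)
    _ = σ * μ.real B := by rw [setIntegral_const, smul_eq_mul, mul_comm]

end WeakLimit

section DensitySets

variable {α X : Type*} [PseudoMetricSpace α] [MeasurableSpace α] [SecondCountableTopology α]
  [BorelSpace α] {μ : Measure α} [IsLocallyFiniteMeasure μ] [PseudoMetricSpace X]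

theorem VitaliFamily.ae_exists_density_set_dist_lt (v : VitaliFamily μ) {x : ℕ → α → X}
    {xlim : α → X} (hx : ∀ n, AEStronglyMeasurable (x n) μ)
    (hx_lim : ∀ᵐ t ∂μ, Tendsto (fun n => x n t) atTop (𝓝 (xlim t))) :
    ∀ᵐ t₀ ∂μ, ∀ δ > 0, ∃ A, MeasurableSet A ∧
      Tendsto (fun a => μ (A ∩ a) / μ a) (v.filterAt t₀) (𝓝 1) ∧
      ∃ N, ∀ n ≥ N, ∀ᵐ t ∂μ, t ∈ A → dist (x n t) (xlim t₀) < δ := by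
  let S : X → ℚ → ℕ → Set α := fun q r N => {t | ∀ n ≥ N, dist ((hx n).mk (x n) t) q < r}
  have hS : ∀ q r N, MeasurableSet (S q r N) := by
    intro q r N
    simp only [S, ofPred_forall]
    refine .iInter fun n => .iInter fun _ => measurableSet_lt ?_ measurable_const
    exact ((continuous_id.dist continuous_const).comp_stronglyMeasurable
      (hx n).stronglyMeasurable_mk).measurable
  obtain ⟨K, ⟨D, hD, hKD⟩, hK⟩ :=
    (aestronglyMeasurable_of_tendsto_ae atTop hx hx_lim).isSeparable_ae_range
  have hdens : ∀ᵐ t₀ ∂μ, ∀ q ∈ D, ∀ r N, t₀ ∈ S q r N →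
      Tendsto (fun a => μ (S q r N ∩ a) / μ a) (v.filterAt t₀) (𝓝 1) := by
    refine (ae_ball_iff hD).2 fun q _ => ae_all_iff.2 fun r => ae_all_iff.2 fun N => ?_
    filter_upwards [v.ae_tendsto_measure_inter_div_of_measurableSet (hS q r N)] with t ht hmem
    simpa [indicator_of_mem hmem] using ht
  filter_upwards [hdens, hx_lim, hK, ae_all_iff.2 fun n => (hx n).ae_eq_mk]
    with t₀ ht₀_dens ht₀_lim ht₀_K ht₀_mk δ hδ
  obtain ⟨q, hqD, hq⟩ := Metric.mem_closure_iff.1 (hKD ht₀_K) (δ / 2) (half_pos hδ)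
  obtain ⟨r, hqr, hrδ⟩ := exists_rat_btwn hq
  obtain ⟨N, hN⟩ := eventually_atTop.1
    ((ht₀_lim.dist tendsto_const_nhds).eventually (gt_mem_nhds hqr))
  refine ⟨S q r N, hS q r N, ht₀_dens q hqD r N fun n hn => ?_, N, fun n hn => ?_⟩
  · rw [← ht₀_mk n]
    exact hN n hn
  filter_upwards [(hx n).ae_eq_mk] with t ht htS
  calc dist (x n t) (xlim t₀) ≤ dist (x n t) q + dist (xlim t₀) q := dist_triangle_right _ _ _
    _ < r + δ / 2 := add_lt_add (ht ▸ htS n hn) hq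
    _ < δ := by linarith

end DensitySets

theorem Convex.mem_of_forall_apply_le {Y : Type*} [NormedAddCommGroup Y] [NormedSpace ℝ Y]
    {s : Set Y} (hs : Convex ℝ s) (hs_cl : IsClosed s) {z : Y}
    (h : ∀ (p : Y →L[ℝ] ℝ) (σ : ℝ), s ⊆ {w | p w < σ} → p z ≤ σ) : z ∈ s := by
  by_contra hz
  obtain ⟨p, σ, hps, hpz⟩ := geometric_hahn_banach_closed_point hs hs_cl hz
  exact (h p σ hps).not_gt hpz

theorem isOpen_weakSpace_setOf_apply_lt {Y : Type*} [NormedAddCommGroup Y] [NormedSpace ℝ Y]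
    (p : Y →L[ℝ] ℝ) (σ : ℝ) : IsOpen (show Set (WeakSpace ℝ Y) from {w | p w < σ}) :=
  isOpen_lt (WeakBilin.eval_continuous (topDualPairing ℝ Y).flip p) continuous_const

section AubinCellina

variable {α X Y : Type*} [PseudoMetricSpace α] [MeasurableSpace α] [SecondCountableTopology α]
  [BorelSpace α] {μ : Measure α} [IsLocallyFiniteMeasure μ] [PseudoMetricSpace X]
  [NormedAddCommGroup Y] [NormedSpace ℝ Y]

theorem ae_mem_of_tendsto_of_weak_tendsto (v : VitaliFamily μ) (F : X → Set Y)
    (hF_cl : ∀ x, IsClosed (F x)) (hF_cv : ∀ x, Convex ℝ (F x))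
    (hF_usc : ∀ O : Set Y, IsOpen (show Set (WeakSpace ℝ Y) from O) →
      IsOpen {x : X | F x ⊆ O})
    {x : ℕ → α → X} {y : ℕ → α → Y} {xlim : α → X} {ylim : α → Y}
    (hx : ∀ n, AEStronglyMeasurable (x n) μ) (hy : ∀ n, Integrable (y n) μ)
    (hylim : Integrable ylim μ)
    (hx_lim : ∀ᵐ t ∂μ, Tendsto (fun n => x n t) atTop (𝓝 (xlim t)))
    (hy_weak : ∀ g : α → (Y →L[ℝ] ℝ), MemLp g ⊤ μ →
      Tendsto (fun n => ∫ t, g t (y n t) ∂μ) atTop (𝓝 (∫ t, g t (ylim t) ∂μ)))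
    (h_mem : ∀ n, ∀ᵐ t ∂μ, y n t ∈ F (x n t)) :
    ∀ᵐ t ∂μ, ylim t ∈ F (xlim t) := by
  filter_upwards [v.ae_tendsto_average_norm_sub hylim.locallyIntegrable,
    v.ae_exists_density_set_dist_lt hx hx_lim] with t₀ ht₀_leb ht₀_dens
  refine (hF_cv _).mem_of_forall_apply_le (hF_cl _) fun p σ hpσ => ?_
  obtain ⟨δ, hδ, hball⟩ := Metric.isOpen_iff.1
    (hF_usc _ (isOpen_weakSpace_setOf_apply_lt p σ)) _ hpσ
  obtain ⟨A, hA, hA_dens, N, hN⟩ := ht₀_dens δ hδ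
  refine apply_le_of_tendsto_average_norm_sub p
    (v.eventually_filterAt_integrableOn t₀ hylim.locallyIntegrable) ht₀_leb hA_dens ?_
  filter_upwards [v.eventually_filterAt_measurableSet t₀, v.eventually_measure_lt_top t₀]
    with a ha ha_fin
  refine setIntegral_le_of_weak_tendsto hy hy_weak (hA.inter ha)
    (measure_ne_top_of_subset inter_subset_right ha_fin.ne) p ?_
  filter_upwards [eventually_ge_atTop N] with n hn
  filter_upwards [hN n hn, h_mem n] with t ht_dist ht_mem ht
  exact (hball (mem_ball.2 (ht_dist ht.1)) ht_mem).le

end AubinCellina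

theorem aubin_cellina_general
    {X Y : Type*}
    [NormedAddCommGroup X]
    [NormedAddCommGroup Y] [NormedSpace ℝ Y]
    (F : X → Set Y)
    (hF_cl : ∀ x, IsClosed (F x))
    (hF_cv : ∀ x, Convex ℝ (F x))
    (hF_usc : ∀ O : Set Y, IsOpen (show Set (WeakSpace ℝ Y) from O) →
      IsOpen {x : X | F x ⊆ O})
    (T : ℝ)
    (x : ℕ → ℝ → X) (y : ℕ → ℝ → Y) (xlim : ℝ → X) (ylim : ℝ → Y)
    (hx_meas : ∀ n, AEStronglyMeasurable (x n) (volume.restrict (Ioc (0 : ℝ) T)))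
    (hy_int : ∀ n, Integrable (y n) (volume.restrict (Ioc (0 : ℝ) T)))
    (hylim_int : Integrable ylim (volume.restrict (Ioc (0 : ℝ) T)))
    (hx_ae : ∀ᵐ t ∂(volume.restrict (Ioc (0 : ℝ) T)),
      Tendsto (fun n => x n t) atTop (𝓝 (xlim t)))
    (hy_weak : ∀ g : ℝ → (Y →L[ℝ] ℝ), MemLp g ⊤ (volume.restrict (Ioc (0 : ℝ) T)) →
      Tendsto (fun n => ∫ t in Ioc (0 : ℝ) T, (g t) (y n t)) atTop
        (𝓝 (∫ t in Ioc (0 : ℝ) T, (g t) (ylim t))))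
    (h_mem : ∀ n, ∀ᵐ t ∂(volume.restrict (Ioc (0 : ℝ) T)), y n t ∈ F (x n t)) :
    ∀ᵐ t ∂(volume.restrict (Ioc (0 : ℝ) T)), ylim t ∈ F (xlim t) :=
  ae_mem_of_tendsto_of_weak_tendsto (Besicovitch.vitaliFamily _) F hF_cl hF_cv hF_usc hx_meas
    hy_int hylim_int hx_ae hy_weak h_mem

/-- **Aubin–Cellina convergence theorem.** Let `X`, `Y` be real Banach spaces and
`F : X → 2^Y` a multifunction with nonempty, closed and convex values which is upper
semicontinuous from `X` (strong topology) into `Y` endowed with the weak topology (i.e. for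
every weakly open `O ⊆ Y` the set `{x | F x ⊆ O}` is open). Let `T > 0` and let
`xₙ : (0,T) → X`, `yₙ : (0,T) → Y` be measurable functions such that `xₙ(t) → x(t)` for a.e.
`t`, `yₙ → y` weakly in `L¹(0,T;Y)` (i.e. the pairings against every `g ∈ L^∞(0,T;Y*)`
converge), and `yₙ(t) ∈ F(xₙ(t))` for all `n` and a.e. `t`. Then `y(t) ∈ F(x(t))` for a.e.
`t ∈ (0,T)`. -/
theorem aubin_cellina
    {X Y : Type*}
    [NormedAddCommGroup X] [NormedSpace ℝ X] [CompleteSpace X]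
    [NormedAddCommGroup Y] [NormedSpace ℝ Y] [CompleteSpace Y]
    (F : X → Set Y)
    (hF_ne : ∀ x, (F x).Nonempty)
    (hF_cl : ∀ x, IsClosed (F x))
    (hF_cv : ∀ x, Convex ℝ (F x))
    (hF_usc : ∀ O : Set Y, IsOpen (show Set (WeakSpace ℝ Y) from O) →
      IsOpen {x : X | F x ⊆ O})
    (T : ℝ) (hT : 0 < T)
    (x : ℕ → ℝ → X) (y : ℕ → ℝ → Y) (xlim : ℝ → X) (ylim : ℝ → Y)
    (hx_meas : ∀ n, AEStronglyMeasurable (x n) (volume.restrict (Ioc (0 : ℝ) T)))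
    (hy_meas : ∀ n, AEStronglyMeasurable (y n) (volume.restrict (Ioc (0 : ℝ) T)))
    (hy_int : ∀ n, Integrable (y n) (volume.restrict (Ioc (0 : ℝ) T)))
    (hylim_int : Integrable ylim (volume.restrict (Ioc (0 : ℝ) T)))
    (hx_ae : ∀ᵐ t ∂(volume.restrict (Ioc (0 : ℝ) T)),
      Tendsto (fun n => x n t) atTop (𝓝 (xlim t)))
    (hy_weak : ∀ g : ℝ → (Y →L[ℝ] ℝ), MemLp g ⊤ (volume.restrict (Ioc (0 : ℝ) T)) →
      Tendsto (fun n => ∫ t in Ioc (0 : ℝ) T, (g t) (y n t)) atTop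
        (𝓝 (∫ t in Ioc (0 : ℝ) T, (g t) (ylim t))))
    (h_mem : ∀ n, ∀ᵐ t ∂(volume.restrict (Ioc (0 : ℝ) T)), y n t ∈ F (x n t)) :
    ∀ᵐ t ∂(volume.restrict (Ioc (0 : ℝ) T)), ylim t ∈ F (xlim t) :=
  aubin_cellina_general F hF_cl hF_cv hF_usc T x y xlim ylim hx_meas hy_int hylim_int hx_ae hy_weak
    h_mem
end

section
/- Let d > 0 and define j : ℝ → ℝ by j(s) = 0 for s < 0 and j(s) = −d e^{−s} + (d/2)s² + d for s ≥ 0. Then: (i) j is locally Lipschitz on ℝ; (ii) its Clarke subdifferential is given by ∂j(s) = {0} for s < 0, ∂j(0) = [0, d], and ∂j(s) = {d e^{−s} + d s} for s > 0; (iii) every ξ ∈ ∂j(s) satisfies |ξ| ≤ d(1 + |s|). -/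
/-!
Write `j s = g (max s 0)` with the smooth branch `g t = -d e^{-t} + (d/2) t² + d`, which
vanishes at `0`. Away from `0`, `j` is strictly differentiable, and for a strictly
differentiable function the two-point quotients `(φ (y + λ v) - φ y) / λ` converge to
`φ' s * v`, so the Clarke subdifferential is `{φ' s}`. At `0`, `j` is monotone and
`0 ≤ g' t ≤ d (1 + t)` on `[0, ∞)`, which bounds the quotients by
`d (1 + max (y + λ v) 0) * max v 0`; the one-sided quotients at `y = 0` attain this bound in
the limit, so `j⁰(0; v) = max (0 * v) (d * v)`, whose subdifferential is `[0, d]`.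
-/

open Filter Topology Set

noncomputable section

/-- The Clarke generalized directional derivative of `φ : ℝ → ℝ` at `s` in direction `v`:
`φ⁰(s;v) = limsup_{y → s, λ ↓ 0} (φ(y + λv) − φ(y))/λ`. -/
def clarkeDerivR (φ : ℝ → ℝ) (s v : ℝ) : ℝ :=
  Filter.limsup (fun p : ℝ × ℝ => (φ (p.1 + p.2 * v) - φ p.1) / p.2)
    ((𝓝 s) ×ˢ (𝓝[>] (0 : ℝ)))

/-- The Clarke subdifferential of `φ : ℝ → ℝ` at `s`:
`∂φ(s) = {ξ ∈ ℝ : ξ·v ≤ φ⁰(s;v) for all v ∈ ℝ}`. -/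
def clarkeSubdiffR (φ : ℝ → ℝ) (s : ℝ) : Set ℝ :=
  { ξ : ℝ | ∀ v : ℝ, ξ * v ≤ clarkeDerivR φ s v }

open Asymptotics

def clarkeQuotient (φ : ℝ → ℝ) (v : ℝ) (p : ℝ × ℝ) : ℝ :=
  (φ (p.1 + p.2 * v) - φ p.1) / p.2

section ClarkeDerivative

variable {φ : ℝ → ℝ} {s v : ℝ}

theorem tendsto_add_mul_nhds_prod_nhdsGT (s v : ℝ) :
    Tendsto (fun p : ℝ × ℝ => p.1 + p.2 * v) (𝓝 s ×ˢ 𝓝[>] 0) (𝓝 s) := by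
  simpa using (tendsto_fst (f := 𝓝 s) (g := 𝓝[>] (0 : ℝ))).add
    ((tendsto_snd.mono_right nhdsWithin_le_nhds).mul_const v)

theorem eventually_pos_snd_nhds_prod_nhdsGT (s : ℝ) :
    ∀ᶠ p : ℝ × ℝ in 𝓝 s ×ˢ 𝓝[>] 0, 0 < p.2 :=
  tendsto_snd.eventually eventually_mem_nhdsWithin

theorem LocallyLipschitz.eventually_abs_clarkeQuotient_le (hφ : LocallyLipschitz φ) (s v : ℝ) :
    ∃ K : ℝ, ∀ᶠ p in 𝓝 s ×ˢ 𝓝[>] 0, |clarkeQuotient φ v p| ≤ K := by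
  obtain ⟨K, U, hU, hK⟩ := hφ s
  refine ⟨K * |v|, ?_⟩
  filter_upwards [tendsto_fst.eventually hU, (tendsto_add_mul_nhds_prod_nhdsGT s v).eventually hU,
    eventually_pos_snd_nhds_prod_nhdsGT s] with p hp hpv hp₂
  have hlip := hK.dist_le_mul _ hpv _ hp
  rw [Real.dist_eq, Real.dist_eq, add_sub_cancel_left, abs_mul, abs_of_pos hp₂] at hlip
  rw [clarkeQuotient, abs_div, abs_of_pos hp₂, div_le_iff₀ hp₂]
  linarith

theorem LocallyLipschitz.isBoundedUnder_le_clarkeQuotient (hφ : LocallyLipschitz φ) (s v : ℝ) :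
    IsBoundedUnder (· ≤ ·) (𝓝 s ×ˢ 𝓝[>] 0) (clarkeQuotient φ v) :=
  let ⟨_, hK⟩ := hφ.eventually_abs_clarkeQuotient_le s v
  isBoundedUnder_of_eventually_le (hK.mono fun _ hp => (abs_le.1 hp).2)

theorem LocallyLipschitz.isCoboundedUnder_le_clarkeQuotient (hφ : LocallyLipschitz φ) (s v : ℝ) :
    IsCoboundedUnder (· ≤ ·) (𝓝 s ×ˢ 𝓝[>] 0) (clarkeQuotient φ v) :=
  let ⟨_, hK⟩ := hφ.eventually_abs_clarkeQuotient_le s v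
  isCoboundedUnder_le_of_eventually_le _ (hK.mono fun _ hp => (abs_le.1 hp).1)

theorem LocallyLipschitz.clarkeDerivR_le_of_eventually_le (hφ : LocallyLipschitz φ)
    {g : ℝ × ℝ → ℝ} {c : ℝ} (hg : Tendsto g (𝓝 s ×ˢ 𝓝[>] 0) (𝓝 c))
    (hle : ∀ᶠ p in 𝓝 s ×ˢ 𝓝[>] 0, clarkeQuotient φ v p ≤ g p) :
    clarkeDerivR φ s v ≤ c :=
  (limsup_le_limsup hle (hφ.isCoboundedUnder_le_clarkeQuotient s v)
    hg.isBoundedUnder_le).trans_eq hg.limsup_eq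

theorem LocallyLipschitz.le_clarkeDerivR_of_tendsto (hφ : LocallyLipschitz φ) {c : ℝ}
    (h : Tendsto (fun t => (φ (s + t * v) - φ s) / t) (𝓝[>] 0) (𝓝 c)) :
    c ≤ clarkeDerivR φ s v := by
  have hpath : Tendsto (fun t : ℝ => (s, t)) (𝓝[>] 0) (𝓝 s ×ˢ 𝓝[>] 0) :=
    tendsto_const_nhds.prodMk tendsto_id
  refine forall_lt_imp_le_iff_le_of_dense.1 fun c' hc' => le_limsup_of_frequently_le ?_
    (hφ.isBoundedUnder_le_clarkeQuotient s v)
  exact hpath.frequently ((h.eventually (lt_mem_nhds hc')).mono fun _ ht => ht.le).frequently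

theorem HasStrictDerivAt.tendsto_clarkeQuotient {φ' : ℝ} (hφ : HasStrictDerivAt φ φ' s)
    (v : ℝ) : Tendsto (clarkeQuotient φ v) (𝓝 s ×ˢ 𝓝[>] 0) (𝓝 (φ' * v)) := by
  have hpair : Tendsto (fun p : ℝ × ℝ => (p.1 + p.2 * v, p.1)) (𝓝 s ×ˢ 𝓝[>] 0) (𝓝 (s, s)) :=
    (tendsto_add_mul_nhds_prod_nhdsGT s v).prodMk_nhds tendsto_fst
  have hsmall : (fun p : ℝ × ℝ => φ (p.1 + p.2 * v) - φ p.1 - p.2 * v * φ')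
      =o[𝓝 s ×ˢ 𝓝[>] 0] Prod.snd := by
    have h := (hasDerivAtFilter_iff_isLittleO.1 hφ).comp_tendsto hpair
    simp only [Function.comp_def, add_sub_cancel_left, smul_eq_mul] at h
    exact h.trans_isBigO ((isBigO_const_mul_self v _ _).congr_left fun _ => mul_comm _ _)
  rw [← zero_add (φ' * v)]
  refine ((hsmall.tendsto_div_nhds_zero).add_const (φ' * v)).congr' ?_
  filter_upwards [eventually_pos_snd_nhds_prod_nhdsGT s] with p hp
  simp only [clarkeQuotient]
  field_simp
  ring

theorem HasStrictDerivAt.clarkeDerivR_eq {φ' : ℝ} (hφ : HasStrictDerivAt φ φ' s) (v : ℝ) :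
    clarkeDerivR φ s v = φ' * v :=
  (hφ.tendsto_clarkeQuotient v).limsup_eq

theorem clarkeSubdiffR_eq_Icc {a b : ℝ} (hab : a ≤ b)
    (h : ∀ v, clarkeDerivR φ s v = max (a * v) (b * v)) : clarkeSubdiffR φ s = Icc a b := by
  ext ξ
  simp only [clarkeSubdiffR, mem_ofPred_eq, h, mem_Icc]
  refine ⟨fun hξ => ⟨?_, ?_⟩, fun ⟨ha, hb⟩ v => ?_⟩
  · simpa [max_eq_left (neg_le_neg hab)] using hξ (-1)
  · simpa [max_eq_right hab] using hξ 1
  · rcases le_total 0 v with hv | hv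
    · exact (mul_le_mul_of_nonneg_right hb hv).trans (le_max_right _ _)
    · exact (mul_le_mul_of_nonpos_right ha hv).trans (le_max_left _ _)

theorem HasStrictDerivAt.clarkeSubdiffR_eq {φ' : ℝ} (hφ : HasStrictDerivAt φ φ' s) :
    clarkeSubdiffR φ s = {φ'} := by
  rw [← Icc_self]
  exact clarkeSubdiffR_eq_Icc le_rfl fun v => by rw [max_self, hφ.clarkeDerivR_eq]

end ClarkeDerivative

def potentialBranch (d t : ℝ) : ℝ :=
  -d * Real.exp (-t) + d / 2 * t ^ 2 + d

def potential (d s : ℝ) : ℝ :=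
  potentialBranch d (max s 0)

section Potential

variable {d : ℝ}

theorem potential_eq_ite (d s : ℝ) :
    potential d s = if s < 0 then 0 else -d * Real.exp (-s) + d / 2 * s ^ 2 + d := by
  split_ifs with hs
  · simp [potential, potentialBranch, max_eq_right hs.le]
  · rw [potential, max_eq_left (not_lt.1 hs), potentialBranch]

theorem hasStrictDerivAt_potentialBranch (d t : ℝ) :
    HasStrictDerivAt (potentialBranch d) (d * Real.exp (-t) + d * t) t := by
  have := ((((hasStrictDerivAt_neg t).exp).const_mul (-d)).add
    (((hasStrictDerivAt_id t).pow 2).const_mul (d / 2))).add_const d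
  exact this.congr_deriv (by simp; ring)

theorem contDiff_potentialBranch (d : ℝ) : ContDiff ℝ 1 (potentialBranch d) := by
  unfold potentialBranch
  fun_prop

theorem locallyLipschitz_potential (d : ℝ) : LocallyLipschitz (potential d) :=
  (contDiff_potentialBranch d).locallyLipschitz.comp
    (LipschitzWith.id.max_const 0).locallyLipschitz

theorem potentialBranch_sub_bounds (hd : 0 ≤ d) {a b : ℝ} (ha : 0 ≤ a) (hab : a ≤ b) :
    0 ≤ potentialBranch d b - potentialBranch d a ∧
      potentialBranch d b - potentialBranch d a ≤ d * (1 + b) * (b - a) := by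
  rcases hab.eq_or_lt with rfl | hab
  · simp
  obtain ⟨c, ⟨hac, hcb⟩, hc⟩ := exists_hasDerivAt_eq_slope (potentialBranch d)
    (fun t => d * Real.exp (-t) + d * t) hab (contDiff_potentialBranch d).continuous.continuousOn
    fun t _ => (hasStrictDerivAt_potentialBranch d t).hasDerivAt
  rw [eq_div_iff (sub_ne_zero.2 hab.ne')] at hc
  have hexp : Real.exp (-c) ≤ 1 := Real.exp_le_one_iff.2 (by linarith)
  constructor
  · rw [← hc]
    exact mul_nonneg (add_nonneg (by positivity) (mul_nonneg hd (by linarith))) (by linarith)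
  · rw [← hc]
    refine mul_le_mul_of_nonneg_right ?_ (by linarith)
    nlinarith

theorem potential_sub_bounds (hd : 0 ≤ d) {a b : ℝ} (hab : a ≤ b) :
    0 ≤ potential d b - potential d a ∧
      potential d b - potential d a ≤ d * (1 + max b 0) * (b - a) := by
  obtain ⟨hnonneg, hle⟩ :=
    potentialBranch_sub_bounds hd (le_max_right a 0) (max_le_max_right 0 hab)
  refine ⟨hnonneg, hle.trans (mul_le_mul_of_nonneg_left ?_ (by positivity))⟩
  rcases le_total a 0 with ha | ha <;> rcases le_total b 0 with hb | hb <;>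
    simp only [max_eq_left, max_eq_right, ha, hb] <;> linarith

theorem clarkeQuotient_potential_le (hd : 0 ≤ d) (v : ℝ) {p : ℝ × ℝ} (hp : 0 < p.2) :
    clarkeQuotient (potential d) v p ≤ d * (1 + max (p.1 + p.2 * v) 0) * max v 0 := by
  rw [clarkeQuotient, div_le_iff₀ hp]
  rcases le_total 0 v with hv | hv
  · have := (potential_sub_bounds hd (a := p.1) (le_add_of_nonneg_right (mul_nonneg hp.le hv))).2
    rw [max_eq_left hv]
    linarith
  · have := (potential_sub_bounds hd (b := p.1)
      (add_le_of_nonpos_right (mul_nonpos_of_nonneg_of_nonpos hp.le hv))).1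
    rw [max_eq_right hv]
    linarith

theorem clarkeDerivR_potential_zero_le (hd : 0 ≤ d) (v : ℝ) :
    clarkeDerivR (potential d) 0 v ≤ max (0 * v) (d * v) := by
  have hlim : Tendsto (fun p : ℝ × ℝ => d * (1 + max (p.1 + p.2 * v) 0) * max v 0)
      (𝓝 0 ×ˢ 𝓝[>] 0) (𝓝 (d * (1 + max 0 0) * max v 0)) :=
    ((((tendsto_add_mul_nhds_prod_nhdsGT 0 v).max tendsto_const_nhds).const_add 1).const_mul
      d).mul_const _
  refine ((locallyLipschitz_potential d).clarkeDerivR_le_of_eventually_le hlim ?_).trans_eq ?_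
  · filter_upwards [eventually_pos_snd_nhds_prod_nhdsGT 0] with p hp
    exact clarkeQuotient_potential_le hd v hp
  · rw [max_self, add_zero, mul_one, mul_max_of_nonneg _ _ hd, mul_zero, zero_mul, max_comm]

theorem le_clarkeDerivR_potential_zero (hd : 0 ≤ d) (v : ℝ) :
    max (0 * v) (d * v) ≤ clarkeDerivR (potential d) 0 v := by
  refine (locallyLipschitz_potential d).le_clarkeDerivR_of_tendsto ?_
  rcases le_total v 0 with hv | hv
  · rw [max_eq_left (by nlinarith), zero_mul]
    refine tendsto_const_nhds.congr' ?_
    filter_upwards [self_mem_nhdsWithin] with t (ht : 0 < t)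
    rw [zero_add, potential, potential, max_eq_right (mul_nonpos_of_nonneg_of_nonpos ht.le hv),
      max_self, sub_self, zero_div]
  · have hderiv : HasDerivAt (fun t => potentialBranch d (t * v)) (d * v) 0 := by
      simpa [Function.comp_def, mul_comm] using
        (hasStrictDerivAt_potentialBranch d (0 * v)).hasDerivAt.scomp 0 (hasDerivAt_mul_const v)
    rw [max_eq_right (by nlinarith)]
    refine ((hasDerivAt_iff_tendsto_slope_zero.1 hderiv).mono_left (nhdsGT_le_nhdsNE 0)).congr' ?_
    filter_upwards [self_mem_nhdsWithin] with t (ht : 0 < t)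
    simp only [potential, zero_add, zero_mul, max_self, max_eq_left (mul_nonneg ht.le hv),
      smul_eq_mul, inv_mul_eq_div]

theorem clarkeSubdiffR_potential_zero (hd : 0 ≤ d) : clarkeSubdiffR (potential d) 0 = Icc 0 d :=
  clarkeSubdiffR_eq_Icc hd fun v =>
    (clarkeDerivR_potential_zero_le hd v).antisymm (le_clarkeDerivR_potential_zero hd v)

theorem hasStrictDerivAt_potential_of_neg {s : ℝ} (hs : s < 0) :
    HasStrictDerivAt (potential d) 0 s :=
  (hasStrictDerivAt_const s (potentialBranch d 0)).congr_of_eventuallyEq <| by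
    filter_upwards [Iio_mem_nhds hs] with y (hy : y < 0)
    rw [potential, max_eq_right hy.le]

theorem hasStrictDerivAt_potential_of_pos {s : ℝ} (hs : 0 < s) :
    HasStrictDerivAt (potential d) (d * Real.exp (-s) + d * s) s :=
  (hasStrictDerivAt_potentialBranch d s).congr_of_eventuallyEq <| by
    filter_upwards [Ioi_mem_nhds hs] with y (hy : 0 < y)
    rw [potential, max_eq_left hy.le]

theorem abs_le_of_mem_clarkeSubdiffR_potential (hd : 0 ≤ d) {s ξ : ℝ}
    (hξ : ξ ∈ clarkeSubdiffR (potential d) s) : |ξ| ≤ d * (1 + |s|) := by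
  rcases lt_trichotomy s 0 with hs | rfl | hs
  · rw [(hasStrictDerivAt_potential_of_neg hs).clarkeSubdiffR_eq, mem_singleton_iff] at hξ
    rw [hξ, abs_zero]
    positivity
  · rw [clarkeSubdiffR_potential_zero hd, mem_Icc] at hξ
    rw [abs_of_nonneg hξ.1, abs_zero, add_zero, mul_one]
    exact hξ.2
  · rw [(hasStrictDerivAt_potential_of_pos hs).clarkeSubdiffR_eq, mem_singleton_iff] at hξ
    have hexp : Real.exp (-s) ≤ 1 := Real.exp_le_one_iff.2 (by linarith)
    rw [hξ, abs_of_pos hs, abs_of_nonneg (by positivity)]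
    nlinarith

end Potential

/-- Let `d > 0` and `j(s) = 0` for `s < 0`, `j(s) = −d e^{−s} + (d/2)s² + d` for `s ≥ 0`.
Then (i) `j` is locally Lipschitz; (ii) `∂j(s) = {0}` for `s < 0`, `∂j(0) = [0, d]` and
`∂j(s) = {d e^{−s} + d s}` for `s > 0`; (iii) every `ξ ∈ ∂j(s)` satisfies
`|ξ| ≤ d (1 + |s|)`. -/
theorem example_potential_properties (d : ℝ) (hd : 0 < d)
    (j : ℝ → ℝ)
    (hj : ∀ s : ℝ, j s = if s < 0 then 0 else -d * Real.exp (-s) + d / 2 * s ^ 2 + d) :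
    LocallyLipschitz j ∧
      (∀ s : ℝ, s < 0 → clarkeSubdiffR j s = {0}) ∧
      clarkeSubdiffR j 0 = Icc 0 d ∧
      (∀ s : ℝ, 0 < s → clarkeSubdiffR j s = {d * Real.exp (-s) + d * s}) ∧
      (∀ s ξ : ℝ, ξ ∈ clarkeSubdiffR j s → |ξ| ≤ d * (1 + |s|)) := by
  obtain rfl : j = potential d := funext fun s => (hj s).trans (potential_eq_ite d s).symm
  exact ⟨locallyLipschitz_potential d,
    fun s hs => (hasStrictDerivAt_potential_of_neg hs).clarkeSubdiffR_eq,
    clarkeSubdiffR_potential_zero hd.le,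
    fun s hs => (hasStrictDerivAt_potential_of_pos hs).clarkeSubdiffR_eq,
    fun s ξ hξ => abs_le_of_mem_clarkeSubdiffR_potential hd.le hξ⟩
end
end
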